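/- arXiv:1706.09237 — 10 statements merged into one kernel-verified Lean document; each statement's English description precedes it below -/
import Mathlib

section
/- Let X be a reflexive real Banach space, Y a real normed space, T, A : X → Y compact linear operators, and ε ∈ [0,1). Suppose either (a) there exists x ∈ M_T such that Ax ∈ (Tx)^+ and for every λ ∈ (−1−√(1−ε²), −1+√(1−ε²))·(‖T‖/‖A‖) there exists a unit vector x_λ ∈ X with ‖Tx_λ + λAx_λ‖ ≥ √(1−ε²)‖T‖, or (b) there exists y ∈ M_T such that Ay ∈ (Ty)^− and for every λ ∈ (1−√(1−ε²), 1+√(1−ε²))·(‖T‖/‖A‖) there exists a unit vector y_λ ∈ X with ‖Ty_λ + λAy_λ‖ ≥ √(1−ε²)‖T‖. Then T ⊥_D^ε A. -/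
/-- Sufficient part of the characterization of approximate Birkhoff-James
orthogonality `⊥_D^ε` for compact operators on a reflexive Banach space. -/
theorem compact_approx_D_orth_sufficient
    {X Y : Type*} [NormedAddCommGroup X] [NormedSpace ℝ X] [CompleteSpace X]
    [NormedAddCommGroup Y] [NormedSpace ℝ Y]
    (hrefl : Function.Surjective (NormedSpace.inclusionInDoubleDual ℝ X))
    (T A : X →L[ℝ] Y) (hT : IsCompactOperator T) (hA : IsCompactOperator A)
    (ε : ℝ) (hε0 : 0 ≤ ε) (hε1 : ε < 1)
    (h : (∃ x : X, ‖x‖ = 1 ∧ ‖T x‖ = ‖T‖ ∧ (∀ l : ℝ, 0 ≤ l → ‖T x + l • A x‖ ≥ ‖T x‖) ∧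
      ∀ l ∈ Set.Ioo ((-1 - Real.sqrt (1 - ε ^ 2)) * (‖T‖ / ‖A‖))
          ((-1 + Real.sqrt (1 - ε ^ 2)) * (‖T‖ / ‖A‖)),
        ∃ xl : X, ‖xl‖ = 1 ∧ ‖T xl + l • A xl‖ ≥ Real.sqrt (1 - ε ^ 2) * ‖T‖) ∨
    (∃ y : X, ‖y‖ = 1 ∧ ‖T y‖ = ‖T‖ ∧ (∀ l : ℝ, l ≤ 0 → ‖T y + l • A y‖ ≥ ‖T y‖) ∧
      ∀ l ∈ Set.Ioo ((1 - Real.sqrt (1 - ε ^ 2)) * (‖T‖ / ‖A‖))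
          ((1 + Real.sqrt (1 - ε ^ 2)) * (‖T‖ / ‖A‖)),
        ∃ yl : X, ‖yl‖ = 1 ∧ ‖T yl + l • A yl‖ ≥ Real.sqrt (1 - ε ^ 2) * ‖T‖)) :
    ∀ l : ℝ, ‖T + l • A‖ ≥ Real.sqrt (1 - ε ^ 2) * ‖T‖ := by
  set s := Real.sqrt (1 - ε ^ 2) with hs
  have hs0 : 0 ≤ s := Real.sqrt_nonneg _
  have hs1 : s ≤ 1 := by
    rw [hs]
    exact Real.sqrt_le_one.mpr (by nlinarith)
  have hTn : (0 : ℝ) ≤ ‖T‖ := norm_nonneg _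
  have happ : ∀ (m : ℝ) (z : X), ‖z‖ = 1 → ‖T z + m • A z‖ ≤ ‖T + m • A‖ := by
    intro m z hz
    have h := (T + m • A).le_opNorm z
    simpa [hz] using h
  intro l
  have htri1 : ‖T‖ ≤ ‖T + l • A‖ + |l| * ‖A‖ := by
    have h' := norm_sub_le (T + l • A) (l • A)
    rw [add_sub_cancel_right] at h'
    have hsm : ‖l • A‖ = |l| * ‖A‖ := by simpa using norm_smul l A
    linarith
  have htri2 : |l| * ‖A‖ ≤ ‖T + l • A‖ + ‖T‖ := by
    have h' := norm_sub_le (T + l • A) T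
    rw [add_sub_cancel_left] at h'
    have hsm : ‖l • A‖ = |l| * ‖A‖ := by simpa using norm_smul l A
    linarith
  rcases h with ⟨x, hx1, hTx, hmono, hint⟩ | ⟨x, hx1, hTx, hmono, hint⟩
  · rcases le_or_gt 0 l with hl | hl
    · have h1 := happ l x hx1
      have h2 := hmono l hl
      nlinarith
    · by_cases hA0 : A = 0
      · simp only [hA0, smul_zero, add_zero]
        nlinarith
      · have hApos : (0 : ℝ) < ‖A‖ := norm_pos_iff.mpr hA0
        have hcan : ‖T‖ / ‖A‖ * ‖A‖ = ‖T‖ := div_mul_cancel₀ _ hApos.ne'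
        have habs : |l| = -l := abs_of_neg hl
        by_cases hmem : l ∈ Set.Ioo ((-1 - s) * (‖T‖ / ‖A‖)) ((-1 + s) * (‖T‖ / ‖A‖))
        · obtain ⟨xl, hxl, hb⟩ := hint l hmem
          have := happ l xl hxl
          linarith
        · rw [Set.mem_Ioo, not_and_or, not_lt, not_lt] at hmem
          rcases hmem with hle | hge
          · have h3 : l * ‖A‖ ≤ (-1 - s) * (‖T‖ / ‖A‖) * ‖A‖ :=
              mul_le_mul_of_nonneg_right hle hApos.le
            rw [mul_assoc, hcan] at h3
            rw [habs] at htri2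
            nlinarith
          · have h3 : (-1 + s) * (‖T‖ / ‖A‖) * ‖A‖ ≤ l * ‖A‖ :=
              mul_le_mul_of_nonneg_right hge hApos.le
            rw [mul_assoc, hcan] at h3
            rw [habs] at htri1
            nlinarith
  · rcases le_or_gt l 0 with hl | hl
    · have h1 := happ l x hx1
      have h2 := hmono l hl
      nlinarith
    · by_cases hA0 : A = 0
      · simp only [hA0, smul_zero, add_zero]
        nlinarith
      · have hApos : (0 : ℝ) < ‖A‖ := norm_pos_iff.mpr hA0
        have hcan : ‖T‖ / ‖A‖ * ‖A‖ = ‖T‖ := div_mul_cancel₀ _ hApos.ne'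
        have habs : |l| = l := abs_of_pos hl
        by_cases hmem : l ∈ Set.Ioo ((1 - s) * (‖T‖ / ‖A‖)) ((1 + s) * (‖T‖ / ‖A‖))
        · obtain ⟨xl, hxl, hb⟩ := hint l hmem
          have := happ l xl hxl
          linarith
        · rw [Set.mem_Ioo, not_and_or, not_lt, not_lt] at hmem
          rcases hmem with hle | hge
          · have h3 : l * ‖A‖ ≤ (1 - s) * (‖T‖ / ‖A‖) * ‖A‖ :=
              mul_le_mul_of_nonneg_right hle hApos.le
            rw [mul_assoc, hcan] at h3
            rw [habs] at htri1
            nlinarith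
          · have h3 : (1 + s) * (‖T‖ / ‖A‖) * ‖A‖ ≤ l * ‖A‖ :=
              mul_le_mul_of_nonneg_right hge hApos.le
            rw [mul_assoc, hcan] at h3
            rw [habs] at htri2
            nlinarith
end

section
/- Let X be a finite dimensional real Banach space and let T, A be bounded linear operators on X. If T ⊥_B A, then there exist x, y ∈ M_T such that Ax ∈ (Tx)^+ and Ay ∈ (Ty)^−. -/
open Filter Topology

/-- Norm attainment on the unit sphere in finite dimensions. -/
lemma exists_norm_attain' {X : Type*} [NormedAddCommGroup X] [NormedSpace ℝ X]
    [FiniteDimensional ℝ X] [Nontrivial X] (S : X →L[ℝ] X) :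
    ∃ x : X, ‖x‖ = 1 ∧ ‖S x‖ = ‖S‖ := by
  obtain ⟨z, hz⟩ := exists_norm_eq X (zero_le_one (α := ℝ))
  have hcpt : IsCompact (Metric.sphere (0 : X) 1) := isCompact_sphere 0 1
  have hne : (Metric.sphere (0 : X) 1).Nonempty := ⟨z, by simp [hz]⟩
  obtain ⟨x, hxmem, hmax⟩ := hcpt.exists_isMaxOn hne
    ((continuous_norm.comp S.continuous).continuousOn)
  have hx1 : ‖x‖ = 1 := by simpa using hxmem
  refine ⟨x, hx1, le_antisymm (by simpa [hx1] using S.le_opNorm x) ?_⟩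
  exact ContinuousLinearMap.opNorm_le_of_unit_norm (norm_nonneg _)
    (fun v hv => hmax (by simp [hv]))

/-- Convexity monotonicity step. -/
lemma convex_step {X : Type*} [NormedAddCommGroup X] [NormedSpace ℝ X]
    (u w : X) {c l : ℝ} (hc : 0 < c) (hcl : c ≤ l)
    (h : ‖u‖ ≤ ‖u + c • w‖) : ‖u + c • w‖ ≤ ‖u + l • w‖ := by
  have hl : 0 < l := hc.trans_le hcl
  set t : ℝ := c / l with ht
  have ht0 : 0 < t := div_pos hc hl
  have ht1 : t ≤ 1 := div_le_one_of_le₀ hcl hl.le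
  have key : u + c • w = (1 - t) • u + t • (u + l • w) := by
    have : t * l = c := div_mul_cancel₀ c hl.ne'
    rw [smul_add, smul_smul, this]
    module
  have hineq : ‖u + c • w‖ ≤ (1 - t) * ‖u‖ + t * ‖u + l • w‖ := by
    calc ‖u + c • w‖ = ‖(1 - t) • u + t • (u + l • w)‖ := by rw [key]
    _ ≤ ‖(1 - t) • u‖ + ‖t • (u + l • w)‖ := norm_add_le _ _
    _ = (1 - t) * ‖u‖ + t * ‖u + l • w‖ := by
        rw [norm_smul, norm_smul, Real.norm_eq_abs, Real.norm_eq_abs,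
          abs_of_nonneg (by linarith), abs_of_nonneg ht0.le]
  have h2 : ‖u + c • w‖ ≤ (1 - t) * ‖u + c • w‖ + t * ‖u + l • w‖ := by
    nlinarith [h]
  nlinarith [h2]

/-- Main auxiliary lemma: the `⁺` direction. -/
lemma aux_plus {X : Type*} [NormedAddCommGroup X] [NormedSpace ℝ X]
    [FiniteDimensional ℝ X] [Nontrivial X] (T A : X →L[ℝ] X)
    (horth : ∀ l : ℝ, ‖T + l • A‖ ≥ ‖T‖) :
    ∃ x : X, ‖x‖ = 1 ∧ ‖T x‖ = ‖T‖ ∧ ∀ l : ℝ, 0 ≤ l → ‖T x + l • A x‖ ≥ ‖T x‖ := by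
  set c : ℕ → ℝ := fun n => 1 / (n + 1) with hcdef
  have hcpos : ∀ n, 0 < c n := fun n => by positivity
  have hc0 : Tendsto c atTop (𝓝 0) := tendsto_one_div_add_atTop_nhds_zero_nat
  choose x hx1 hxmax using fun n => exists_norm_attain' (T + c n • A)
  have hn : ∀ n, ‖T (x n) + c n • A (x n)‖ ≥ ‖T‖ := by
    intro n
    have := horth (c n)
    have h2 : (T + c n • A) (x n) = T (x n) + c n • A (x n) := by simp
    rw [← h2, hxmax n]
    exact this
  have hcpt : IsCompact (Metric.sphere (0 : X) 1) := isCompact_sphere 0 1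
  obtain ⟨x₀, hx₀mem, φ, hφ, hφtend⟩ := hcpt.tendsto_subseq
    (x := x) (fun n => by simp [hx1 n])
  have hx₀1 : ‖x₀‖ = 1 := by simpa using hx₀mem
  -- the perturbation term tends to 0
  have hsmall : Tendsto (fun n => c (φ n) • A (x (φ n))) atTop (𝓝 0) := by
    refine squeeze_zero_norm (a := fun n => c (φ n) * ‖A‖) ?_ ?_
    · intro n
      rw [norm_smul, Real.norm_eq_abs, abs_of_nonneg (hcpos _).le]
      have := A.le_opNorm (x (φ n))
      rw [hx1 (φ n), mul_one] at this
      exact mul_le_mul_of_nonneg_left this (hcpos _).le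
    · have : Tendsto (fun n => c (φ n)) atTop (𝓝 0) :=
        hc0.comp hφ.tendsto_atTop
      simpa using this.mul_const ‖A‖
  have hTtend : Tendsto (fun n => T (x (φ n))) atTop (𝓝 (T x₀)) :=
    (T.continuous.tendsto x₀).comp hφtend
  have hTnorm : ‖T x₀‖ = ‖T‖ := by
    refine le_antisymm (by simpa [hx₀1] using T.le_opNorm x₀) ?_
    have htend : Tendsto (fun n => ‖T (x (φ n)) + c (φ n) • A (x (φ n))‖)
        atTop (𝓝 ‖T x₀‖) := by
      have := (hTtend.add hsmall).norm
      simpa using this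
    exact ge_of_tendsto htend (Eventually.of_forall fun n => hn (φ n))
  refine ⟨x₀, hx₀1, hTnorm, fun l hl => ?_⟩
  rcases hl.eq_or_lt with rfl | hl
  · simp
  -- for large n, c (φ n) ≤ l, and convexity gives the bound
  have hev : ∀ᶠ n in atTop, ‖T (x (φ n)) + l • A (x (φ n))‖ ≥ ‖T‖ := by
    have hcl : ∀ᶠ n in atTop, c (φ n) ≤ l := by
      have : Tendsto (fun n => c (φ n)) atTop (𝓝 0) := hc0.comp hφ.tendsto_atTop
      exact this.eventually_le_const hl
    filter_upwards [hcl] with n hcl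
    have hub : ‖T (x (φ n))‖ ≤ ‖T (x (φ n)) + c (φ n) • A (x (φ n))‖ := by
      refine le_trans ?_ (hn (φ n))
      simpa [hx1 (φ n)] using T.le_opNorm (x (φ n))
    exact le_trans (hn (φ n))
      (convex_step (T (x (φ n))) (A (x (φ n))) (hcpos (φ n)) hcl hub)
  have htend2 : Tendsto (fun n => ‖T (x (φ n)) + l • A (x (φ n))‖)
      atTop (𝓝 ‖T x₀ + l • A x₀‖) := by
    have hAtend : Tendsto (fun n => A (x (φ n))) atTop (𝓝 (A x₀)) :=
      (A.continuous.tendsto x₀).comp hφtend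
    exact (hTtend.add (hAtend.const_smul l)).norm
  have := ge_of_tendsto htend2 hev
  rw [hTnorm]
  exact this

/-- If `T ⊥_B A` for bounded linear operators on a finite dimensional real Banach
space, then there exist norm attaining unit vectors `x, y` of `T` with
`Ax ∈ (Tx)⁺` and `Ay ∈ (Ty)⁻`. -/
theorem birkhoff_orth_iff_norm_attainment_necessary
    {X : Type*} [NormedAddCommGroup X] [NormedSpace ℝ X] [FiniteDimensional ℝ X]
    [Nontrivial X] (T A : X →L[ℝ] X)
    (horth : ∀ l : ℝ, ‖T + l • A‖ ≥ ‖T‖) :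
    ∃ x y : X, ‖x‖ = 1 ∧ ‖T x‖ = ‖T‖ ∧ ‖y‖ = 1 ∧ ‖T y‖ = ‖T‖ ∧
      (∀ l : ℝ, 0 ≤ l → ‖T x + l • A x‖ ≥ ‖T x‖) ∧
      (∀ l : ℝ, l ≤ 0 → ‖T y + l • A y‖ ≥ ‖T y‖) := by
  obtain ⟨x, hx1, hxT, hxplus⟩ := aux_plus T A horth
  have horth' : ∀ l : ℝ, ‖T + l • (-A)‖ ≥ ‖T‖ := by
    intro l
    have : T + l • (-A) = T + (-l) • A := by module
    rw [this]; exact horth (-l)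
  obtain ⟨y, hy1, hyT, hyplus⟩ := aux_plus T (-A) horth'
  refine ⟨x, y, hx1, hxT, hy1, hyT, hxplus, fun l hl => ?_⟩
  have := hyplus (-l) (by linarith)
  simpa using this
end

section
/- Let X be a finite dimensional real Banach space and let T, A be bounded linear operators on X. If there exist x, y ∈ M_T such that Ax ∈ (Tx)^+ and Ay ∈ (Ty)^−, then T ⊥_B A. -/
/-- If there exist norm attaining unit vectors `x, y` of `T` with `Ax ∈ (Tx)⁺` and
`Ay ∈ (Ty)⁻`, where `T, A` are bounded linear operators on a finite dimensional
real Banach space, then `T ⊥_B A`. -/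
theorem birkhoff_orth_iff_norm_attainment_sufficient
    {X : Type*} [NormedAddCommGroup X] [NormedSpace ℝ X] [FiniteDimensional ℝ X]
    (T A : X →L[ℝ] X)
    (h : ∃ x y : X, ‖x‖ = 1 ∧ ‖T x‖ = ‖T‖ ∧ ‖y‖ = 1 ∧ ‖T y‖ = ‖T‖ ∧
      (∀ l : ℝ, 0 ≤ l → ‖T x + l • A x‖ ≥ ‖T x‖) ∧
      (∀ l : ℝ, l ≤ 0 → ‖T y + l • A y‖ ≥ ‖T y‖)) :
    ∀ l : ℝ, ‖T + l • A‖ ≥ ‖T‖ := by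
  obtain ⟨x, y, hx, hTx, hy, hTy, hplus, hminus⟩ := h
  intro l
  rcases le_or_gt 0 l with hl | hl
  · calc ‖T‖ = ‖T x‖ := hTx.symm
      _ ≤ ‖T x + l • A x‖ := hplus l hl
      _ = ‖(T + l • A) x‖ := by simp
      _ ≤ ‖T + l • A‖ * ‖x‖ := (T + l • A).le_opNorm x
      _ = ‖T + l • A‖ := by rw [hx, mul_one]
  · calc ‖T‖ = ‖T y‖ := hTy.symm
      _ ≤ ‖T y + l • A y‖ := hminus l hl.le
      _ = ‖(T + l • A) y‖ := by simp
      _ ≤ ‖T + l • A‖ * ‖y‖ := (T + l • A).le_opNorm y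
      _ = ‖T + l • A‖ := by rw [hy, mul_one]
end

section
/- Let H be a real Hilbert space, T, A bounded linear operators on H, and ε ∈ [0,1). If there exists x ∈ M_T such that |⟨Tx, Ax⟩| ≤ ε‖T‖‖A‖, then T ⊥_B^ε A. -/
open RealInnerProductSpace

/-- If there is a norm attaining unit vector `x` of `T` with `|⟨Tx, Ax⟩| ≤ ε‖T‖‖A‖`,
then `T ⊥_B^ε A`, for bounded linear operators on a real Hilbert space. -/
theorem approx_B_orth_of_inner_le
    {H : Type*} [NormedAddCommGroup H] [InnerProductSpace ℝ H]
    (T A : H →L[ℝ] H) (ε : ℝ) (hε0 : 0 ≤ ε) (hε1 : ε < 1)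
    (h : ∃ x : H, ‖x‖ = 1 ∧ ‖T x‖ = ‖T‖ ∧ |⟪T x, A x⟫| ≤ ε * ‖T‖ * ‖A‖) :
    ∀ l : ℝ, ‖T + l • A‖ ^ 2 ≥ ‖T‖ ^ 2 - 2 * ε * ‖T‖ * ‖l • A‖ := by
  obtain ⟨x, hx, hTx, hin⟩ := h
  intro l
  have h1 : ‖(T + l • A) x‖ ≤ ‖T + l • A‖ := by
    calc ‖(T + l • A) x‖ ≤ ‖T + l • A‖ * ‖x‖ := (T + l • A).le_opNorm x
    _ = ‖T + l • A‖ := by rw [hx, mul_one]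
  have h2 : ‖(T + l • A) x‖ ^ 2 ≤ ‖T + l • A‖ ^ 2 :=
    pow_le_pow_left₀ (norm_nonneg _) h1 2
  have hexp : ‖(T + l • A) x‖ ^ 2
      = ‖T x‖ ^ 2 + 2 * (l * ⟪T x, A x⟫) + ‖l • A x‖ ^ 2 := by
    have : (T + l • A) x = T x + l • A x := by simp
    rw [this, norm_add_sq_real, real_inner_smul_right]
  have hAx : ‖A x‖ ≤ ‖A‖ := by
    calc ‖A x‖ ≤ ‖A‖ * ‖x‖ := A.le_opNorm x
    _ = ‖A‖ := by rw [hx, mul_one]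
  have key : 2 * (l * ⟪T x, A x⟫) ≥ -(2 * ε * ‖T‖ * ‖l • A‖) := by
    have h3 : |2 * (l * ⟪T x, A x⟫)| ≤ 2 * ε * ‖T‖ * ‖l • A‖ := by
      rw [abs_mul, abs_mul, abs_two]
      have : |l| * |⟪T x, A x⟫| ≤ |l| * (ε * ‖T‖ * ‖A‖) :=
        mul_le_mul_of_nonneg_left hin (abs_nonneg l)
      calc 2 * (|l| * |⟪T x, A x⟫|) ≤ 2 * (|l| * (ε * ‖T‖ * ‖A‖)) := by linarith
      _ = 2 * ε * ‖T‖ * ‖l • A‖ := by rw [norm_smul l A, Real.norm_eq_abs]; ring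
    linarith [neg_abs_le (2 * (l * ⟪T x, A x⟫))]
  have : ‖T‖ ^ 2 - 2 * ε * ‖T‖ * ‖l • A‖ ≤ ‖(T + l • A) x‖ ^ 2 := by
    rw [hexp, hTx]
    nlinarith [sq_nonneg ‖l • A x‖]
  linarith
end

section
/- Let H be a real Hilbert space and let T be a bounded linear operator on H such that M_T = S_{H₀} for some finite dimensional subspace H₀ of H and sup{‖Tz‖ : z ∈ H₀^⊥, ‖z‖ = 1} < ‖T‖. Then for every bounded linear operator A on H and every ε ∈ [0,1), if T ⊥_B^ε A then there exists x ∈ M_T such that |⟨Tx, Ax⟩| ≤ ε‖T‖‖A‖. -/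
/-!
Every vector of `H₀` attains the norm of `T`, so `⟪T u, T v⟫ = ‖T‖² ⟪u, v⟫` for `u ∈ H₀`: thus `T`
maps `H₀` and `H₀ᗮ` to orthogonal subspaces, and on `H₀ᗮ` it has norm `k < ‖T‖`. Splitting a unit
vector as `u + v` and completing the square in `‖v‖` gives, for small `t ≥ 0`,
`‖T + t • A‖² ≤ ‖T‖² + 2 t m + C t²` whenever `⟪T u, A u⟫ ≤ m ‖u‖²` on `H₀`. If
`⟪T x, A x⟫ < -ε‖T‖‖A‖` on the (compact) unit sphere of `H₀`, some such `m` lies below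
`-ε‖T‖‖A‖`, which contradicts `T ⊥_B^ε A` as `t → 0⁺`. Applied to `A` and to `-A`, this gives unit
vectors of `H₀` at which `⟪T x, A x⟫` is `≥ -ε‖T‖‖A‖`, respectively `≤ ε‖T‖‖A‖`. As this quadratic
form is even, replacing one vector by its negative makes the segment between them avoid `0`, and
the intermediate value theorem along the normalized segment finishes the proof.
-/

open RealInnerProductSpace
open Filter Topology Set

section

variable {E F : Type*} [NormedAddCommGroup E] [InnerProductSpace ℝ E]
  [NormedAddCommGroup F] [InnerProductSpace ℝ F]

theorem Submodule.forall_of_forall_norm_eq_one (K : Submodule ℝ E) {P : E → Prop} (h0 : P 0)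
    (hsmul : ∀ x, ∀ r : ℝ, 0 < r → P x → P (r • x)) (h : ∀ x ∈ K, ‖x‖ = 1 → P x) :
    ∀ x ∈ K, P x := by
  intro x hx
  rcases eq_or_ne x 0 with rfl | hx0
  · exact h0
  have hx0' : ‖x‖ ≠ 0 := norm_ne_zero_iff.2 hx0
  have := hsmul _ ‖x‖ (norm_pos_iff.2 hx0) (h _ (K.smul_mem ‖x‖⁻¹ hx)
    (by rw [norm_smul, norm_inv, norm_norm, inv_mul_cancel₀ hx0']))
  rwa [smul_inv_smul₀ hx0'] at this

theorem IsCompact.exists_lt_forall_le_of_forall_lt {X α : Type*} [TopologicalSpace X]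
    [LinearOrder α] [TopologicalSpace α] [ClosedIciTopology α] [NoMinOrder α] {s : Set X}
    (hs : IsCompact s) {f : X → α} (hf : ContinuousOn f s) {c : α} (h : ∀ x ∈ s, f x < c) :
    ∃ m < c, ∀ x ∈ s, f x ≤ m := by
  rcases s.eq_empty_or_nonempty with rfl | hne
  · obtain ⟨m, hm⟩ := exists_lt c
    exact ⟨m, hm, by simp⟩
  obtain ⟨x₀, hx₀, hmax⟩ := hs.exists_isMaxOn hne hf
  exact ⟨f x₀, h x₀ hx₀, hmax⟩

theorem Submodule.isCompact_setOf_mem_norm_eq_one (K : Submodule ℝ E) [FiniteDimensional ℝ K] :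
    IsCompact {x | x ∈ K ∧ ‖x‖ = 1} := by
  convert (isCompact_sphere (0 : K) 1).image continuous_subtype_val using 1
  ext x
  simp only [mem_ofPred_eq, mem_image, mem_sphere_iff_norm, sub_zero]
  exact ⟨fun ⟨hx, hx1⟩ => ⟨⟨x, hx⟩, hx1, rfl⟩, by rintro ⟨y, hy1, rfl⟩; exact ⟨y.2, hy1⟩⟩

theorem ContinuousLinearMap.opNorm_sq_le_of_unit_norm (T : E →L[ℝ] F) {C : ℝ} (hC : 0 ≤ C)
    (h : ∀ x, ‖x‖ = 1 → ‖T x‖ ^ 2 ≤ C) : ‖T‖ ^ 2 ≤ C := by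
  have := T.opNorm_le_of_unit_norm (Real.sqrt_nonneg C) fun x hx => Real.le_sqrt_of_sq_le (h x hx)
  calc ‖T‖ ^ 2 ≤ Real.sqrt C ^ 2 := by gcongr
    _ = C := Real.sq_sqrt hC

theorem ContinuousLinearMap.norm_map_le_sSup_mul_norm (T : E →L[ℝ] F) (K : Submodule ℝ E) :
    ∀ v ∈ K, ‖T v‖ ≤ sSup {r : ℝ | ∃ z ∈ K, ‖z‖ = 1 ∧ r = ‖T z‖} * ‖v‖ := by
  have hbdd : BddAbove {r : ℝ | ∃ z ∈ K, ‖z‖ = 1 ∧ r = ‖T z‖} :=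
    ⟨‖T‖, by rintro _ ⟨z, -, hz1, rfl⟩; simpa [hz1] using T.le_opNorm z⟩
  refine K.forall_of_forall_norm_eq_one (by simp) (fun x r _ hx => ?_) fun z hz hz1 => ?_
  · rw [map_smul, norm_smul, norm_smul, mul_left_comm]
    exact mul_le_mul_of_nonneg_left hx (norm_nonneg r)
  · simpa [hz1] using le_csSup hbdd ⟨z, hz, hz1, rfl⟩

theorem ContinuousLinearMap.inner_map_map_of_norm_map_eq (T : E →L[ℝ] F) {w : E}
    (hw : ‖T w‖ = ‖T‖ * ‖w‖) (v : E) : ⟪T w, T v⟫ = ‖T‖ ^ 2 * ⟪w, v⟫ := by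
  have hquad : ∀ θ : ℝ, 0 ≤ (‖T‖ ^ 2 * ‖v‖ ^ 2 - ‖T v‖ ^ 2) * (θ * θ)
      + 2 * (‖T‖ ^ 2 * ⟪w, v⟫ - ⟪T w, T v⟫) * θ + 0 := by
    intro θ
    have h := pow_le_pow_left₀ (norm_nonneg _) (T.le_opNorm (w + θ • v)) 2
    rw [mul_pow, map_add, map_smul, norm_add_sq_real, norm_add_sq_real, inner_smul_right,
      inner_smul_right, norm_smul, norm_smul, mul_pow, mul_pow, Real.norm_eq_abs, sq_abs,
      hw] at h
    nlinarith
  have := discrim_le_zero hquad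
  rw [discrim] at this
  nlinarith [sq_nonneg (‖T‖ ^ 2 * ⟪w, v⟫ - ⟪T w, T v⟫)]

variable {T A : E →L[ℝ] F} {K : Submodule ℝ E} {k m : ℝ}

theorem norm_map_add_sq_le (hK : ∀ u ∈ K, ‖T u‖ = ‖T‖ * ‖u‖) (hk : ∀ v ∈ Kᗮ, ‖T v‖ ≤ k * ‖v‖)
    {u v : E} (hu : u ∈ K) (hv : v ∈ Kᗮ) :
    ‖T (u + v)‖ ^ 2 ≤ ‖T‖ ^ 2 * ‖u‖ ^ 2 + k ^ 2 * ‖v‖ ^ 2 := by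
  have horth : ⟪T u, T v⟫ = 0 := by
    rw [T.inner_map_map_of_norm_map_eq (hK u hu), Submodule.inner_right_of_mem_orthogonal hu hv,
      mul_zero]
  have hTv := pow_le_pow_left₀ (norm_nonneg _) (hk v hv) 2
  rw [map_add, norm_add_sq_real, horth, hK u hu]
  nlinarith

theorem inner_map_add_le (hk : ∀ v ∈ Kᗮ, ‖T v‖ ≤ k * ‖v‖)
    (hm : ∀ u ∈ K, ⟪T u, A u⟫ ≤ m * ‖u‖ ^ 2) {u v : E} (hu : u ∈ K) (hv : v ∈ Kᗮ) :
    ⟪T (u + v), A (u + v)⟫ ≤ m * ‖u‖ ^ 2 + ‖A‖ * ‖v‖ * (‖T‖ * ‖u‖ + k * ‖u + v‖) := by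
  have h₁ : ⟪T u, A v⟫ ≤ ‖T‖ * ‖u‖ * (‖A‖ * ‖v‖) :=
    (real_inner_le_norm _ _).trans (mul_le_mul (T.le_opNorm u) (A.le_opNorm v)
      (norm_nonneg _) (by positivity))
  have h₂ : ⟪T v, A (u + v)⟫ ≤ k * ‖v‖ * (‖A‖ * ‖u + v‖) :=
    (real_inner_le_norm _ _).trans (mul_le_mul (hk v hv) (A.le_opNorm _)
      (norm_nonneg _) ((norm_nonneg _).trans (hk v hv)))
  have hsplit : ⟪T (u + v), A (u + v)⟫ = ⟪T u, A u⟫ + ⟪T u, A v⟫ + ⟪T v, A (u + v)⟫ := by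
    rw [map_add T, inner_add_left, map_add A u v, inner_add_right]
  linarith [hm u hu]

theorem norm_add_smul_apply_sq_le (hK : ∀ u ∈ K, ‖T u‖ = ‖T‖ * ‖u‖)
    (hk : ∀ v ∈ Kᗮ, ‖T v‖ ≤ k * ‖v‖) (hm : ∀ u ∈ K, ⟪T u, A u⟫ ≤ m * ‖u‖ ^ 2) {t : ℝ}
    (ht : 0 ≤ t) {u v : E} (hu : u ∈ K) (hv : v ∈ Kᗮ) (huv : ‖u + v‖ = 1) :
    ‖(T + t • A) (u + v)‖ ^ 2 ≤ ‖T‖ ^ 2 + 2 * t * m - (‖T‖ ^ 2 - k ^ 2 + 2 * t * m) * ‖v‖ ^ 2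
      + 2 * t * ‖A‖ * (‖T‖ + k) * ‖v‖ + t ^ 2 * ‖A‖ ^ 2 := by
  have hu2 : ‖u‖ ^ 2 = 1 - ‖v‖ ^ 2 := by
    have := norm_add_sq_real u v
    rw [Submodule.inner_right_of_mem_orthogonal hu hv, huv] at this
    linarith
  have hu1 : ‖u‖ ≤ 1 := by nlinarith [norm_nonneg u, norm_nonneg v]
  have hT := norm_map_add_sq_le hK hk hu hv
  have hTA : t * ⟪T (u + v), A (u + v)⟫ ≤ t * (m * ‖u‖ ^ 2 + ‖A‖ * ‖v‖ * (‖T‖ + k)) := by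
    refine mul_le_mul_of_nonneg_left ((inner_map_add_le hk hm hu hv).trans ?_) ht
    rw [huv, mul_one]
    gcongr
    exact mul_le_of_le_one_right (norm_nonneg _) hu1
  have hA : t ^ 2 * ‖A (u + v)‖ ^ 2 ≤ t ^ 2 * ‖A‖ ^ 2 := by
    have := A.le_opNorm (u + v)
    rw [huv, mul_one] at this
    gcongr
  have happ : (T + t • A) (u + v) = T (u + v) + t • A (u + v) := rfl
  rw [happ, norm_add_sq_real, inner_smul_right, norm_smul, mul_pow, Real.norm_eq_abs, sq_abs]
  rw [hu2] at hT hTA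
  nlinarith

theorem eventually_norm_add_smul_sq_le [K.HasOrthogonalProjection]
    (hK : ∀ u ∈ K, ‖T u‖ = ‖T‖ * ‖u‖) (hk : ∀ v ∈ Kᗮ, ‖T v‖ ≤ k * ‖v‖) (hk0 : 0 ≤ k) (hkT : k < ‖T‖)
    (hm : ∀ u ∈ K, ⟪T u, A u⟫ ≤ m * ‖u‖ ^ 2) :
    ∃ C, ∀ᶠ t in 𝓝[≥] (0 : ℝ), ‖T + t • A‖ ^ 2 ≤ ‖T‖ ^ 2 + 2 * t * m + C * t ^ 2 := by
  set g := ‖T‖ ^ 2 - k ^ 2 with hg_def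
  have hg : 0 < g := by nlinarith
  set B := ‖A‖ * (‖T‖ + k)
  refine ⟨‖A‖ ^ 2 + 2 * B ^ 2 / g, ?_⟩
  have hsmall : ∀ᶠ t in 𝓝[≥] (0 : ℝ), -(2 * t * m) < g / 2 := by
    have : Tendsto (fun t : ℝ => -(2 * t * m)) (𝓝[≥] 0) (𝓝 0) := by
      have hcont : Continuous fun t : ℝ => -(2 * t * m) := by fun_prop
      exact (hcont.tendsto' 0 0 (by simp)).mono_left nhdsWithin_le_nhds
    exact this.eventually_lt_const (by positivity)
  filter_upwards [self_mem_nhdsWithin, hsmall] with t (ht : 0 ≤ t) htm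
  -- `C` comes from completing the square in `s = ‖v‖`, the `Kᗮ`-component of a unit vector
  have hsq : ∀ s : ℝ, -(g + 2 * t * m) * s ^ 2 + 2 * t * B * s ≤ 2 * B ^ 2 / g * t ^ 2 := by
    intro s
    rw [div_mul_eq_mul_div, le_div_iff₀ hg]
    nlinarith [sq_nonneg (g * s - 2 * t * B),
      mul_nonneg (mul_nonneg hg.le (sq_nonneg s)) (by linarith : 0 ≤ g + 2 * t * m - g / 2)]
  have hC : 0 ≤ (‖A‖ ^ 2 + 2 * B ^ 2 / g) * t ^ 2 := by positivity
  refine (T + t • A).opNorm_sq_le_of_unit_norm (by nlinarith) fun x hx => ?_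
  obtain ⟨u, hu, v, hv, rfl⟩ := K.exists_add_mem_mem_orthogonal x
  have := norm_add_smul_apply_sq_le hK hk hm ht hu hv hx
  have := hsq ‖v‖
  linarith

theorem exists_mem_norm_eq_one_neg_le_inner [FiniteDimensional ℝ K] {c : ℝ}
    (hK : ∀ u ∈ K, ‖T u‖ = ‖T‖ * ‖u‖) (hk : ∀ v ∈ Kᗮ, ‖T v‖ ≤ k * ‖v‖) (hk0 : 0 ≤ k) (hkT : k < ‖T‖)
    (horth : ∀ t : ℝ, 0 < t → ‖T‖ ^ 2 - 2 * t * c ≤ ‖T + t • A‖ ^ 2) :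
    ∃ x ∈ K, ‖x‖ = 1 ∧ -c ≤ ⟪T x, A x⟫ := by
  by_contra! h
  obtain ⟨m, hmc, hm⟩ := K.isCompact_setOf_mem_norm_eq_one.exists_lt_forall_le_of_forall_lt
    (T.continuous.inner A.continuous).continuousOn fun x hx => h x hx.1 hx.2
  have hm' : ∀ u ∈ K, ⟪T u, A u⟫ ≤ m * ‖u‖ ^ 2 := by
    refine K.forall_of_forall_norm_eq_one (by simp) (fun x r hr hx => ?_)
      fun x hx hx1 => by simpa [hx1] using hm x ⟨hx, hx1⟩
    rw [map_smul, map_smul, inner_smul_left, inner_smul_right, norm_smul, Real.norm_eq_abs,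
      abs_of_pos hr, RCLike.conj_to_real]
    nlinarith [mul_le_mul_of_nonneg_left hx (mul_pos hr hr).le]
  obtain ⟨C, hC⟩ := eventually_norm_add_smul_sq_le hK hk hk0 hkT hm'
  have hlim : ∀ᶠ t in 𝓝[>] (0 : ℝ), -2 * c ≤ 2 * m + C * t := by
    filter_upwards [self_mem_nhdsWithin, nhdsWithin_mono _ Ioi_subset_Ici_self hC]
      with t (ht : 0 < t) htC
    have := horth t ht
    exact le_of_mul_le_mul_left (by nlinarith) ht
  have hlim' : Tendsto (fun t : ℝ => 2 * m + C * t) (𝓝[>] 0) (𝓝 (2 * m)) := by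
    have hcont : Continuous fun t : ℝ => 2 * m + C * t := by fun_prop
    exact (hcont.tendsto' 0 _ (by simp)).mono_left nhdsWithin_le_nhds
  linarith [ge_of_tendsto hlim' hlim]

theorem Icc_subset_image_setOf_mem_norm_eq_one {f : E → ℝ} (hf : Continuous f)
    (heven : ∀ x, f (-x) = f x) {p q : E} (hp : p ∈ K) (hp1 : ‖p‖ = 1)
    (hq : q ∈ K) (hq1 : ‖q‖ = 1) : Icc (f p) (f q) ⊆ f '' {x | x ∈ K ∧ ‖x‖ = 1} := by
  wlog hpq : 0 ≤ ⟪p, q⟫ generalizing q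
  · have := this (K.neg_mem hq) (by rw [norm_neg, hq1]) (by rw [inner_neg_right]; linarith)
    rwa [heven] at this
  -- `p + q` pairs positively with the whole segment, so normalizing along it is continuous
  have hne : ∀ z ∈ segment ℝ p q, z ≠ 0 := by
    rintro z ⟨a, b, ha, hb, hab, rfl⟩ h0
    have : ⟪p + q, a • p + b • q⟫ = (a + b) * (1 + ⟪p, q⟫) := by
      simp only [inner_add_left, inner_add_right, inner_smul_right, real_inner_self_eq_norm_sq,
        real_inner_comm p q, hp1, hq1]
      ring
    rw [h0, inner_zero_right, hab] at this
    linarith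
  have hg : ContinuousOn (fun x : E => f (‖x‖⁻¹ • x)) (segment ℝ p q) :=
    hf.comp_continuousOn ((continuous_norm.continuousOn.inv₀
      fun z hz => norm_ne_zero_iff.2 (hne z hz)).smul continuousOn_id)
  have hIVT := (convex_segment p q).isPreconnected.intermediate_value
    (left_mem_segment ℝ p q) (right_mem_segment ℝ p q) hg
  simp only [hp1, hq1, inv_one, one_smul] at hIVT
  refine hIVT.trans ?_
  rintro _ ⟨z, hz, rfl⟩
  refine ⟨‖z‖⁻¹ • z, ⟨K.smul_mem _ (K.convex.segment_subset hp hq hz), ?_⟩, rfl⟩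
  rw [norm_smul, norm_inv, norm_norm, inv_mul_cancel₀ (norm_ne_zero_iff.2 (hne z hz))]

theorem exists_mem_norm_eq_one_abs_le_of_even {f : E → ℝ} (hf : Continuous f)
    (heven : ∀ x, f (-x) = f x) {c : ℝ} (hc : 0 ≤ c) {p q : E}
    (hp : p ∈ K) (hp1 : ‖p‖ = 1) (hfp : -c ≤ f p) (hq : q ∈ K) (hq1 : ‖q‖ = 1)
    (hfq : f q ≤ c) : ∃ z ∈ K, ‖z‖ = 1 ∧ |f z| ≤ c := by
  by_cases hpc : f p ≤ c
  · exact ⟨p, hp, hp1, abs_le.2 ⟨hfp, hpc⟩⟩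
  by_cases hqc : -c ≤ f q
  · exact ⟨q, hq, hq1, abs_le.2 ⟨hqc, hfq⟩⟩
  obtain ⟨z, ⟨hz, hz1⟩, hfz⟩ := Icc_subset_image_setOf_mem_norm_eq_one hf heven hq hq1 hp hp1
    (show (0 : ℝ) ∈ Icc (f q) (f p) from ⟨by linarith, by linarith⟩)
  exact ⟨z, hz, hz1, by rw [hfz, abs_zero]; exact hc⟩

end

theorem exists_inner_le_of_approx_B_orth_general
    {H : Type*} [NormedAddCommGroup H] [InnerProductSpace ℝ H]
    (T : H →L[ℝ] H) (H₀ : Submodule ℝ H) [FiniteDimensional ℝ H₀]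
    (hMT : {x : H | ‖x‖ = 1 ∧ ‖T x‖ = ‖T‖} = {x : H | x ∈ H₀ ∧ ‖x‖ = 1})
    (hsup : sSup {r : ℝ | ∃ z ∈ H₀ᗮ, ‖z‖ = 1 ∧ r = ‖T z‖} < ‖T‖)
    (A : H →L[ℝ] H) (ε : ℝ) (hε0 : 0 ≤ ε)
    (horth : ∀ l : ℝ, ‖T + l • A‖ ^ 2 ≥ ‖T‖ ^ 2 - 2 * ε * ‖T‖ * ‖l • A‖) :
    ∃ x : H, ‖x‖ = 1 ∧ ‖T x‖ = ‖T‖ ∧ |⟪T x, A x⟫| ≤ ε * ‖T‖ * ‖A‖ := by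
  have hK : ∀ u ∈ H₀, ‖T u‖ = ‖T‖ * ‖u‖ := by
    refine H₀.forall_of_forall_norm_eq_one (by simp) (fun x r _ hx => ?_) fun x hx hx1 => ?_
    · rw [map_smul, norm_smul, norm_smul, hx]
      ring
    · rw [((Set.ext_iff.1 hMT x).2 ⟨hx, hx1⟩).2, hx1, mul_one]
  set k := sSup {r : ℝ | ∃ z ∈ H₀ᗮ, ‖z‖ = 1 ∧ r = ‖T z‖}
  have hk0 : 0 ≤ k := Real.sSup_nonneg (by rintro _ ⟨z, -, -, rfl⟩; exact norm_nonneg _)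
  have hbound : ∀ t : ℝ, ‖T‖ ^ 2 - 2 * |t| * (ε * ‖T‖ * ‖A‖) ≤ ‖T + t • A‖ ^ 2 := fun t => by
    have := horth t
    rw [norm_smul, Real.norm_eq_abs] at this
    linarith
  obtain ⟨p, hp, hp1, hfp⟩ := exists_mem_norm_eq_one_neg_le_inner hK
    (T.norm_map_le_sSup_mul_norm H₀ᗮ) hk0 hsup
    fun t ht => by simpa [abs_of_pos ht] using hbound t
  obtain ⟨q, hq, hq1, hfq⟩ := exists_mem_norm_eq_one_neg_le_inner (A := -A) hK
    (T.norm_map_le_sSup_mul_norm H₀ᗮ) hk0 hsup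
    fun t ht => by simpa [abs_of_pos ht] using hbound (-t)
  obtain ⟨z, hz, hz1, hfz⟩ := exists_mem_norm_eq_one_abs_le_of_even
    (T.continuous.inner A.continuous) (fun x => by simp) (by positivity) hp hp1 hfp hq hq1
    (by simpa using hfq)
  exact ⟨z, hz1, by rw [hK z hz, hz1, mul_one], hfz⟩

/-- If `T` is a bounded operator on a real Hilbert space whose norm attainment set
is the unit sphere of a finite dimensional subspace `H₀` and the norm of `T`
restricted to `H₀ᗮ` is strictly smaller than `‖T‖`, then `T ⊥_B^ε A` implies the
existence of a norm attaining unit vector `x` with `|⟨Tx, Ax⟩| ≤ ε‖T‖‖A‖`. -/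
theorem exists_inner_le_of_approx_B_orth
    {H : Type*} [NormedAddCommGroup H] [InnerProductSpace ℝ H] [CompleteSpace H]
    (T : H →L[ℝ] H) (H₀ : Submodule ℝ H) [FiniteDimensional ℝ H₀]
    (hMT : {x : H | ‖x‖ = 1 ∧ ‖T x‖ = ‖T‖} = {x : H | x ∈ H₀ ∧ ‖x‖ = 1})
    (hsup : sSup {r : ℝ | ∃ z ∈ H₀ᗮ, ‖z‖ = 1 ∧ r = ‖T z‖} < ‖T‖)
    (A : H →L[ℝ] H) (ε : ℝ) (hε0 : 0 ≤ ε) (hε1 : ε < 1)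
    (horth : ∀ l : ℝ, ‖T + l • A‖ ^ 2 ≥ ‖T‖ ^ 2 - 2 * ε * ‖T‖ * ‖l • A‖) :
    ∃ x : H, ‖x‖ = 1 ∧ ‖T x‖ = ‖T‖ ∧ |⟪T x, A x⟫| ≤ ε * ‖T‖ * ‖A‖ :=
  exists_inner_le_of_approx_B_orth_general T H₀ hMT hsup A ε hε0 horth
end

section
/- Let H be a real Hilbert space, let T be a bounded linear operator on H with ‖T‖ = 1, and suppose M_T = S_{H₀} where H₀ is an infinite dimensional closed subspace of H. Then for every ε ∈ [0,1) there exists a bounded linear operator A on H with ‖A‖ = 1 such that T ⊥_B^ε A, while |⟨Tx, Ax⟩| > ε‖T‖‖A‖ for every x ∈ M_T. -/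
open RealInnerProductSpace Filter Topology
open scoped ENNReal

/-!
Since `M_T = S_{H₀}` and `‖T‖ = 1`, `T` is isometric on `H₀`. For a contraction `S` of `H₀` put
`A = T ∘ S ∘ P_{H₀}`; then `⟪T y, A y⟫ = ⟪y, S y⟫` on `H₀`, and testing `T + λA` on a unit vector
`u ∈ H₀` gives `‖T + λA‖ ≥ |⟪u, u + λ S u⟫| = |1 + λ⟪u, S u⟫|`. As `H₀` is infinite dimensional,
`S` can be taken diagonal in a Hilbert basis with weights in `(ε, 1]` which equal `1` somewhere
and accumulate at `ε`. Then `‖A‖ = ‖S‖ = 1`, `⟪T x, A x⟫ > ε` on `M_T`, and `‖T + λA‖ ≥ |1 + λε|`,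
so `‖T + λA‖² ≥ 1 + 2λε ≥ 1 - 2ε|λ|`.
-/

namespace lp

variable {𝕜 ι : Type*} [RCLike 𝕜] {p : ℝ≥0∞}

theorem norm_mul_apply_le (w : lp (fun _ : ι => 𝕜) ∞) (g : lp (fun _ : ι => 𝕜) p) (i : ι) :
    ‖(⇑w * ⇑g) i‖ ≤ ‖((‖w‖ : 𝕜) • g) i‖ := by
  simpa [norm_mul, norm_smul] using mul_le_mul_of_nonneg_right
    (lp.norm_apply_le_norm ENNReal.top_ne_zero w i) (norm_nonneg (g i))

theorem memℓp_mul (w : lp (fun _ : ι => 𝕜) ∞) (g : lp (fun _ : ι => 𝕜) p) : Memℓp (⇑w * ⇑g) p :=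
  (lp.memℓp _).mono' (norm_mul_apply_le w g)

variable [Fact (1 ≤ p)]

noncomputable def diagonal (w : lp (fun _ : ι => 𝕜) ∞) :
    lp (fun _ : ι => 𝕜) p →L[𝕜] lp (fun _ : ι => 𝕜) p :=
  LinearMap.mkContinuous
    { toFun := fun g => ⟨⇑w * ⇑g, memℓp_mul w g⟩
      map_add' := fun g h => by ext i; exact mul_add (w i) (g i) (h i)
      map_smul' := fun c g => by ext i; simp [mul_left_comm] }
    ‖w‖ fun g => by
      have hp : p ≠ 0 := (zero_lt_one.trans_le Fact.out).ne'
      simpa [lp.norm_const_smul hp] using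
        lp.norm_mono (x := (⟨⇑w * ⇑g, memℓp_mul w g⟩ : lp _ p)) hp (norm_mul_apply_le w g)

@[simp]
theorem diagonal_apply (w : lp (fun _ : ι => 𝕜) ∞) (g : lp (fun _ : ι => 𝕜) p) (i : ι) :
    diagonal w g i = w i * g i := rfl

theorem norm_diagonal_le (w : lp (fun _ : ι => 𝕜) ∞) :
    ‖(diagonal w : lp (fun _ : ι => 𝕜) p →L[𝕜] _)‖ ≤ ‖w‖ :=
  LinearMap.mkContinuous_norm_le _ (norm_nonneg w) _

theorem diagonal_single [DecidableEq ι] (w : lp (fun _ : ι => 𝕜) ∞) (i : ι) (c : 𝕜) :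
    diagonal w (lp.single p i c) = w i • lp.single p i c := by
  ext j
  by_cases h : j = i
  · subst h; simp
  · simp [lp.single_apply, h]

theorem exists_norm_le_one_forall_lt_tendsto [Infinite ι] {ε : ℝ} (hε₀ : -1 ≤ ε) (hε₁ : ε < 1) :
    ∃ w : lp (fun _ : ι => ℝ) ∞, ‖w‖ ≤ 1 ∧ (∀ i, ε < w i) ∧ (∃ i, w i = 1) ∧
      ∃ f : ℕ → ι, Tendsto (fun n => w (f n)) atTop (𝓝 ε) := by
  let f := Infinite.natEmbedding ι
  let c : ℕ → ℝ := fun n => ε + (1 - ε) * 2⁻¹ ^ n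
  have hc : ∀ n, ε < c n ∧ c n ≤ 1 := fun n => by
    have h₁ : (0 : ℝ) < 2⁻¹ ^ n := by positivity
    have h₂ : (2⁻¹ : ℝ) ^ n ≤ 1 := pow_le_one₀ (by norm_num) (by norm_num)
    constructor <;> simp only [c] <;> nlinarith
  let v : ι → ℝ := Function.extend f c 1
  have hv : ∀ i, ε < v i ∧ v i ≤ 1 := fun i => by
    by_cases h : ∃ n, f n = i
    · obtain ⟨n, rfl⟩ := h
      simpa [v, f.injective.extend_apply] using hc n
    · simpa [v, Function.extend_apply' _ _ _ h] using hε₁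
  have hv_abs : ∀ i, ‖v i‖ ≤ 1 := fun i => abs_le.2 ⟨by linarith [hv i], (hv i).2⟩
  let w : lp (fun _ : ι => ℝ) ∞ := ⟨v, memℓp_infty ⟨1, by rintro _ ⟨i, rfl⟩; exact hv_abs i⟩⟩
  have hwf : ∀ n, w (f n) = c n := fun n => f.injective.extend_apply c 1 n
  refine ⟨w, norm_le_of_forall_le zero_le_one hv_abs, fun i => (hv i).1, ⟨f 0, ?_⟩, f, ?_⟩
  · simp [hwf, c]
  · simp only [hwf, c]
    simpa using tendsto_const_nhds.add ((tendsto_pow_atTop_nhds_zero_of_lt_one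
      (by norm_num : (0 : ℝ) ≤ 2⁻¹) (by norm_num)).const_mul (1 - ε))

end lp

namespace HilbertBasis

variable {𝕜 ι E : Type*} [RCLike 𝕜] [NormedAddCommGroup E] [InnerProductSpace 𝕜 E]

theorem finiteDimensional [Finite ι] (b : HilbertBasis ι 𝕜 E) : FiniteDimensional 𝕜 E := by
  have := Fintype.ofFinite ι
  exact b.toOrthonormalBasis.toBasis.finiteDimensional_of_finite

noncomputable def diagonal (b : HilbertBasis ι 𝕜 E) (w : lp (fun _ : ι => 𝕜) ∞) : E →L[𝕜] E :=
  b.repr.symm.toLinearIsometry.toContinuousLinearMap ∘L lp.diagonal w ∘L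
    b.repr.toLinearIsometry.toContinuousLinearMap

variable (b : HilbertBasis ι 𝕜 E) (w : lp (fun _ : ι => 𝕜) ∞)

theorem diagonal_apply (x : E) : b.diagonal w x = b.repr.symm (lp.diagonal w (b.repr x)) := rfl

theorem norm_diagonal_le : ‖b.diagonal w‖ ≤ ‖w‖ :=
  ContinuousLinearMap.opNorm_le_bound _ (norm_nonneg w) fun x => by
    rw [diagonal_apply, LinearIsometryEquiv.norm_map, ← b.repr.norm_map x]
    exact (lp.diagonal w).le_of_opNorm_le (lp.norm_diagonal_le w) _

theorem diagonal_apply_self (i : ι) : b.diagonal w (b i) = w i • b i := by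
  classical
  rw [diagonal_apply, b.repr_self, lp.diagonal_single, map_smul, b.repr_symm_single]

section Real

variable {E : Type*} [NormedAddCommGroup E] [InnerProductSpace ℝ E]
  (b : HilbertBasis ι ℝ E) (w : lp (fun _ : ι => ℝ) ∞)

theorem hasSum_inner_diagonal_apply_self (x : E) :
    HasSum (fun i => w i * b.repr x i ^ 2) ⟪x, b.diagonal w x⟫ := by
  rw [diagonal_apply, ← b.repr.inner_map_map, LinearIsometryEquiv.apply_symm_apply]
  refine (lp.hasSum_inner (b.repr x) (lp.diagonal w (b.repr x))).congr_fun fun i => ?_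
  simp only [lp.diagonal_apply, RCLike.inner_apply, conj_trivial]
  ring

theorem lt_inner_diagonal_apply_self {ε : ℝ} (hε : ∀ i, ε < w i) {x : E} (hx : x ≠ 0) :
    ε * ‖x‖ ^ 2 < ⟪x, b.diagonal w x⟫ := by
  obtain ⟨i₀, hi₀⟩ : ∃ i, b.repr x i ≠ 0 := by
    by_contra! h
    exact hx (b.repr.map_eq_zero_iff.mp (lp.ext (funext h)))
  have hnorm : HasSum (fun i => ε * b.repr x i ^ 2) (ε * ‖x‖ ^ 2) := by
    rw [← b.repr.norm_map, ← real_inner_self_eq_norm_sq]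
    refine (lp.hasSum_inner (b.repr x) (b.repr x)).mul_left ε |>.congr_fun fun i => ?_
    simp [sq]
  refine hasSum_lt (fun i => ?_) ?_ hnorm (b.hasSum_inner_diagonal_apply_self w x) (i := i₀)
  · exact mul_le_mul_of_nonneg_right (hε i).le (sq_nonneg _)
  · exact mul_lt_mul_of_pos_right (hε i₀) (by positivity)

end Real

end HilbertBasis

theorem exists_norm_eq_one_lt_inner_self_tendsto {E : Type*} [NormedAddCommGroup E]
    [InnerProductSpace ℝ E] [CompleteSpace E] (hE : ¬ FiniteDimensional ℝ E) {ε : ℝ}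
    (hε₀ : -1 ≤ ε) (hε₁ : ε < 1) :
    ∃ S : E →L[ℝ] E, ‖S‖ = 1 ∧ (∀ x, ‖x‖ = 1 → ε < ⟪x, S x⟫) ∧
      ∃ u : ℕ → E, (∀ n, ‖u n‖ = 1) ∧ Tendsto (fun n => ⟪u n, S (u n)⟫) atTop (𝓝 ε) := by
  obtain ⟨s, b, -⟩ := exists_hilbertBasis ℝ E
  have : Infinite s := not_finite_iff_infinite.mp fun _ => hE b.finiteDimensional
  obtain ⟨w, hw, hεw, ⟨i₁, hi₁⟩, f, hf⟩ := 
    lp.exists_norm_le_one_forall_lt_tendsto (ι := s) hε₀ hε₁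
  have hb : ∀ i, ⟪b i, b.diagonal w (b i)⟫ = w i := fun i => by
    rw [b.diagonal_apply_self, real_inner_smul_right, real_inner_self_eq_norm_sq,
      b.orthonormal.1 i, one_pow, mul_one]
  refine ⟨b.diagonal w, le_antisymm ((b.norm_diagonal_le w).trans hw) ?_, fun x hx => ?_,
    fun n => b (f n), fun n => b.orthonormal.1 _, by simpa only [hb] using hf⟩
  · simpa [b.diagonal_apply_self, hi₁, b.orthonormal.1 i₁] using (b.diagonal w).le_opNorm (b i₁)
  · have := b.lt_inner_diagonal_apply_self w hεw (x := x) (by rintro rfl; simp at hx)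
    rwa [hx, one_pow, mul_one] at this

theorem norm_apply_eq_mul_norm_of_forall_norm_eq {E F : Type*} [NormedAddCommGroup E]
    [NormedSpace ℝ E] [SeminormedAddCommGroup F] [NormedSpace ℝ F] (T : E →L[ℝ] F)
    {K : Submodule ℝ E} (h : ∀ x ∈ K, ‖x‖ = 1 → ‖T x‖ = ‖T‖) {x : E} (hx : x ∈ K) :
    ‖T x‖ = ‖T‖ * ‖x‖ := by
  rcases eq_or_ne x 0 with rfl | hx₀
  · simp
  have hx' : ‖x‖ ≠ 0 := norm_ne_zero_iff.mpr hx₀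
  have := h (‖x‖⁻¹ • x) (K.smul_mem _ hx)
    (by rw [norm_smul, norm_inv, norm_norm, inv_mul_cancel₀ hx'])
  rw [map_smul, norm_smul, norm_inv, norm_norm] at this
  field_simp at this
  linarith

section

variable {H : Type*} [NormedAddCommGroup H] [InnerProductSpace ℝ H]
  {K : Submodule ℝ H} [K.HasOrthogonalProjection] (T : H →L[ℝ] H) (S : K →L[ℝ] K)

theorem comp_orthogonalProjection_apply_coe (y : K) :
    (T ∘L K.subtypeL ∘L S ∘L K.orthogonalProjectionOnto) y = T (S y) := by
  simp [Submodule.orthogonalProjectionOnto_mem_subspace_eq_self]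

variable {T} (hT : ∀ y : K, ‖T y‖ = ‖y‖)
include hT

theorem norm_comp_orthogonalProjection :
    ‖T ∘L K.subtypeL ∘L S ∘L K.orthogonalProjectionOnto‖ = ‖S‖ := by
  apply le_antisymm
  · refine ContinuousLinearMap.opNorm_le_bound _ (norm_nonneg S) fun x => ?_
    calc ‖T (S (K.orthogonalProjectionOnto x))‖ = ‖S (K.orthogonalProjectionOnto x)‖ := hT _
      _ ≤ ‖S‖ * ‖K.orthogonalProjectionOnto x‖ := S.le_opNorm _
      _ ≤ ‖S‖ * ‖x‖ := by gcongr; exact K.norm_orthogonalProjectionOnto_apply_le x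
  · refine ContinuousLinearMap.opNorm_le_bound _ (norm_nonneg _) fun y => ?_
    rw [← hT, ← comp_orthogonalProjection_apply_coe]
    exact ContinuousLinearMap.le_opNorm _ _

theorem inner_apply_comp_orthogonalProjection_apply (y : K) :
    ⟪T y, (T ∘L K.subtypeL ∘L S ∘L K.orthogonalProjectionOnto) y⟫ = ⟪y, S y⟫ := by
  rw [comp_orthogonalProjection_apply_coe]
  exact (⟨T.toLinearMap ∘ₗ K.subtype, hT⟩ : K →ₗᵢ[ℝ] H).inner_map_map y (S y)

theorem abs_one_add_mul_inner_le_norm_add_smul_comp {u : K} (hu : ‖u‖ = 1) (l : ℝ) :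
    |1 + l * ⟪u, S u⟫| ≤ ‖T + l • (T ∘L K.subtypeL ∘L S ∘L K.orthogonalProjectionOnto)‖ :=
  calc |1 + l * ⟪u, S u⟫| = |⟪u, u + l • S u⟫| := by
        rw [inner_add_right, inner_smul_right, real_inner_self_eq_norm_sq, hu, one_pow]
    _ ≤ ‖u + l • S u‖ := by simpa [hu] using abs_real_inner_le_norm u (u + l • S u)
    _ = ‖T ↑(u + l • S u)‖ := (hT _).symm
    _ = ‖(T + l • (T ∘L K.subtypeL ∘L S ∘L K.orthogonalProjectionOnto)) u‖ := by
        rw [add_apply, smul_apply,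
          comp_orthogonalProjection_apply_coe, Submodule.coe_add, Submodule.coe_smul, map_add,
          map_smul]
    _ ≤ _ := ContinuousLinearMap.unit_le_opNorm _ _ (by rw [← Submodule.coe_norm, hu])

end

/-- If the norm attainment set of a norm-one bounded operator `T` on a real Hilbert
space is the unit sphere of an infinite dimensional closed subspace `H₀`, then for
every `ε ∈ [0,1)` there is a norm-one operator `A` with `T ⊥_B^ε A` but
`|⟨Tx, Ax⟩| > ε‖T‖‖A‖` for every norm attaining unit vector `x` of `T`. -/
theorem exists_counterexample_of_infinite_dimensional_norm_attainment
    {H : Type*} [NormedAddCommGroup H] [InnerProductSpace ℝ H] [CompleteSpace H]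
    (T : H →L[ℝ] H) (hTnorm : ‖T‖ = 1)
    (H₀ : Submodule ℝ H) (hclosed : IsClosed (H₀ : Set H))
    (hinf : ¬ FiniteDimensional ℝ H₀)
    (hMT : {x : H | ‖x‖ = 1 ∧ ‖T x‖ = ‖T‖} = {x : H | x ∈ H₀ ∧ ‖x‖ = 1})
    (ε : ℝ) (hε0 : 0 ≤ ε) (hε1 : ε < 1) :
    ∃ A : H →L[ℝ] H, ‖A‖ = 1 ∧
      (∀ l : ℝ, ‖T + l • A‖ ^ 2 ≥ ‖T‖ ^ 2 - 2 * ε * ‖T‖ * ‖l • A‖) ∧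
      (∀ x : H, ‖x‖ = 1 → ‖T x‖ = ‖T‖ → |⟪T x, A x⟫| > ε * ‖T‖ * ‖A‖) := by
  have : CompleteSpace H₀ := hclosed.completeSpace_coe
  have hiso : ∀ y : H₀, ‖T y‖ = ‖y‖ := fun y => by
    rw [norm_apply_eq_mul_norm_of_forall_norm_eq T (fun x hx h₁ => (hMT.superset ⟨hx, h₁⟩).2) y.2,
      hTnorm, one_mul, Submodule.coe_norm]
  obtain ⟨S, hS, hSε, u, hu, hlim⟩ :=
    exists_norm_eq_one_lt_inner_self_tendsto hinf (by linarith) hε1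
  have hA := (norm_comp_orthogonalProjection S hiso).trans hS
  refine ⟨_, hA, fun l => ?_, fun x hx₁ hx₂ => ?_⟩
  · have key : |1 + l * ε| ≤ ‖T + l • (T ∘L H₀.subtypeL ∘L S ∘L H₀.orthogonalProjectionOnto)‖ :=
      le_of_tendsto' ((hlim.const_mul l).const_add 1).abs fun n =>
        abs_one_add_mul_inner_le_norm_add_smul_comp S hiso (hu n) l
    have hsq := pow_le_pow_left₀ (abs_nonneg _) key 2
    rw [sq_abs] at hsq
    rw [norm_smul, hA, hTnorm, Real.norm_eq_abs]
    nlinarith [neg_abs_le l, sq_nonneg (l * ε)]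
  · lift x to H₀ using (hMT.subset ⟨hx₁, hx₂⟩).1
    rw [inner_apply_comp_orthogonalProjection_apply S hiso, hA, hTnorm, mul_one, mul_one]
    exact (hSε x (by simpa using hx₁)).trans_le (le_abs_self _)
end

section
/- Let H be a real Hilbert space and let T be a bounded linear operator on H with ‖T‖ = 1 such that M_T = S_{H₀} for some closed subspace H₀ of H, and suppose sup{‖Tz‖ : z ∈ H₀^⊥, ‖z‖ = 1} = ‖T‖. Then for every ε ∈ [0,1) there exists a bounded linear operator A on H with ‖A‖ = 1 such that T ⊥_B^ε A, while |⟨Tx, Ax⟩| > ε‖T‖‖A‖ for every x ∈ M_T. -/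
/-!
If `T` attains its norm at some unit vector, that vector lies in `H₀`, and `A = T ∘ P_{H₀}` works:
`A` has norm `‖T‖`, agrees with `T` on `M_T ⊆ H₀`, so `⟨Tx, Ax⟩ = ‖T‖²`, and kills `H₀ᗮ`, so
`‖T + λA‖ ≥ ‖Tz‖` for unit `z ∈ H₀ᗮ`, whence `‖T + λA‖ ≥ ‖T‖` by the hypothesis on the supremum.
If `T` attains its norm nowhere, the last requirement is vacuous, and Hahn–Banach yields a
norm-one `A` in the kernel of a norming functional of `T`; `A` can be chosen nonzero because `T`
is not a multiple of the identity.
-/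

open RealInnerProductSpace

section BirkhoffOrthogonal

variable {E : Type*} [NormedAddCommGroup E] [NormedSpace ℝ E]

def BirkhoffOrthogonal (x y : E) : Prop :=
  ∀ l : ℝ, ‖x‖ ≤ ‖x + l • y‖

theorem BirkhoffOrthogonal.approx {x y : E} (h : BirkhoffOrthogonal x y) {ε : ℝ} (hε : 0 ≤ ε)
    (l : ℝ) : ‖x + l • y‖ ^ 2 ≥ ‖x‖ ^ 2 - 2 * ε * ‖x‖ * ‖l • y‖ := by
  have := h l
  nlinarith [norm_nonneg x, mul_nonneg (mul_nonneg hε (norm_nonneg x)) (norm_nonneg (l • y))]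

-- The witness is a unit vector in the kernel of a norming functional of `x`.
theorem exists_norm_eq_one_birkhoffOrthogonal {x y : E} (hy : ∀ c : ℝ, y ≠ c • x) :
    ∃ z : E, ‖z‖ = 1 ∧ BirkhoffOrthogonal x z := by
  rcases eq_or_ne x 0 with rfl | hx
  · exact ⟨‖y‖⁻¹ • y, norm_smul_inv_norm (by simpa using hy 0), fun l => by simp⟩
  obtain ⟨f, hf, hfx⟩ := exists_dual_vector'' ℝ x
  set w := y - (f y / ‖x‖) • x
  have hw : w ≠ 0 := sub_ne_zero.mpr (hy _)
  have hfw : f w = 0 := by simp [w, hfx, norm_ne_zero_iff.mpr hx]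
  refine ⟨‖w‖⁻¹ • w, norm_smul_inv_norm hw, fun l => ?_⟩
  calc ‖x‖ = f (x + l • ‖w‖⁻¹ • w) := by simp [hfx, hfw]
    _ ≤ |f (x + l • ‖w‖⁻¹ • w)| := le_abs_self _
    _ ≤ ‖f‖ * ‖x + l • ‖w‖⁻¹ • w‖ := f.le_opNorm _
    _ ≤ ‖x + l • ‖w‖⁻¹ • w‖ := mul_le_of_le_one_left (norm_nonneg _) hf

theorem exists_norm_eq_one_birkhoffOrthogonal_of_not_attains {T : E →L[ℝ] E} (hT : T ≠ 0)
    (hattain : ∀ x : E, ‖x‖ = 1 → ‖T x‖ ≠ ‖T‖) :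
    ∃ A : E →L[ℝ] E, ‖A‖ = 1 ∧ BirkhoffOrthogonal T A := by
  refine exists_norm_eq_one_birkhoffOrthogonal (y := ContinuousLinearMap.id ℝ E) fun c hc => ?_
  obtain ⟨v, hv⟩ : ∃ v, T v ≠ 0 := by
    by_contra! h
    exact hT (ContinuousLinearMap.ext h)
  have : Nontrivial E := nontrivial_of_ne v 0 fun h => hv (by simp [h])
  obtain ⟨x, hx⟩ := exists_norm_eq E zero_le_one
  have hc0 : c ≠ 0 := by
    rintro rfl
    simpa [hx] using congrArg (‖· x‖) hc
  have hTc : T = c⁻¹ • ContinuousLinearMap.id ℝ E := by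
    rw [hc, smul_smul, inv_mul_cancel₀ hc0, one_smul]
  exact hattain x hx (by simp [hTc, norm_smul, hx])

end BirkhoffOrthogonal

section Projection

variable {H : Type*} [NormedAddCommGroup H] [InnerProductSpace ℝ H]
  (T : H →L[ℝ] H) (K : Submodule ℝ H) [K.HasOrthogonalProjection]

theorem birkhoffOrthogonal_comp_starProjection
    (hsup : sSup {r : ℝ | ∃ z ∈ Kᗮ, ‖z‖ = 1 ∧ r = ‖T z‖} = ‖T‖) :
    BirkhoffOrthogonal T (T ∘L K.starProjection) := by
  intro l
  rw [← hsup]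
  refine Real.sSup_le ?_ (norm_nonneg _)
  rintro r ⟨z, hz, hz1, rfl⟩
  have hPz : K.starProjection z = 0 := K.starProjection_apply_eq_zero_iff.mpr hz
  calc ‖T z‖ = ‖(T + l • T ∘L K.starProjection) z‖ := by simp [hPz]
    _ ≤ ‖T + l • T ∘L K.starProjection‖ := by
      simpa [hz1] using (T + l • T ∘L K.starProjection).le_opNorm z

theorem norm_comp_starProjection {x : H} (hxK : x ∈ K) (hx : ‖x‖ = 1) (hTx : ‖T x‖ = ‖T‖) :
    ‖T ∘L K.starProjection‖ = ‖T‖ := by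
  refine le_antisymm ?_ ?_
  · simpa using T.opNorm_comp_le K.starProjection |>.trans
      (mul_le_of_le_one_right (norm_nonneg T) K.starProjection_norm_le)
  · calc ‖T‖ = ‖(T ∘L K.starProjection) x‖ := by simp [K.starProjection_eq_self_iff.mpr hxK, hTx]
      _ ≤ ‖T ∘L K.starProjection‖ := by simpa [hx] using (T ∘L K.starProjection).le_opNorm x

end Projection

/-- If the norm attainment set of a norm-one bounded operator `T` on a real Hilbert
space is the unit sphere of a closed subspace `H₀` and the norm of `T` restricted
to `H₀ᗮ` equals `‖T‖`, then for every `ε ∈ [0,1)` there is a norm-one operator `A`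
with `T ⊥_B^ε A` but `|⟨Tx, Ax⟩| > ε‖T‖‖A‖` for every norm attaining unit vector
`x` of `T`. -/
theorem exists_counterexample_of_norm_on_orthogonal_complement
    {H : Type*} [NormedAddCommGroup H] [InnerProductSpace ℝ H] [CompleteSpace H]
    (T : H →L[ℝ] H) (hTnorm : ‖T‖ = 1)
    (H₀ : Submodule ℝ H) (hclosed : IsClosed (H₀ : Set H))
    (hMT : {x : H | ‖x‖ = 1 ∧ ‖T x‖ = ‖T‖} = {x : H | x ∈ H₀ ∧ ‖x‖ = 1})
    (hsup : sSup {r : ℝ | ∃ z ∈ H₀ᗮ, ‖z‖ = 1 ∧ r = ‖T z‖} = ‖T‖)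
    (ε : ℝ) (hε0 : 0 ≤ ε) (hε1 : ε < 1) :
    ∃ A : H →L[ℝ] H, ‖A‖ = 1 ∧
      (∀ l : ℝ, ‖T + l • A‖ ^ 2 ≥ ‖T‖ ^ 2 - 2 * ε * ‖T‖ * ‖l • A‖) ∧
      (∀ x : H, ‖x‖ = 1 → ‖T x‖ = ‖T‖ → |⟪T x, A x⟫| > ε * ‖T‖ * ‖A‖) := by
  have hmem : ∀ x, ‖x‖ = 1 → ‖T x‖ = ‖T‖ → x ∈ H₀ := fun x hx hTx =>
    (hMT.subset ⟨hx, hTx⟩).1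
  by_cases hattain : ∃ x₀, ‖x₀‖ = 1 ∧ ‖T x₀‖ = ‖T‖
  · obtain ⟨x₀, hx₀, hTx₀⟩ := hattain
    have : CompleteSpace H₀ := hclosed.completeSpace_coe
    have hA := norm_comp_starProjection T H₀ (hmem x₀ hx₀ hTx₀) hx₀ hTx₀
    refine ⟨T ∘L H₀.starProjection, hA.trans hTnorm,
      (birkhoffOrthogonal_comp_starProjection T H₀ hsup).approx hε0, fun x hx hTx => ?_⟩
    have hPx : H₀.starProjection x = x := H₀.starProjection_eq_self_iff.mpr (hmem x hx hTx)
    simp [hPx, hTx, hA, hTnorm, hε1]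
  · push Not at hattain
    have hT : T ≠ 0 := by rintro rfl; simp at hTnorm
    obtain ⟨A, hA, hTA⟩ := exists_norm_eq_one_birkhoffOrthogonal_of_not_attains hT hattain
    exact ⟨A, hA, hTA.approx hε0, fun x hx hTx => absurd hTx (hattain x hx)⟩
end

section
/- Let H be a real Hilbert space and let T be a nonzero compact linear operator on H such that M_T = S_{H₀} for some closed subspace H₀ of H. Then H₀ is finite dimensional and sup{‖Tz‖ : z ∈ H₀^⊥, ‖z‖ = 1} < ‖T‖. -/
/-!
On `H₀` the operator `T` is `‖T‖` times an isometry, so the relatively compact image of the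
unit ball of `H₀` forces that ball to be compact. For the gap, a compact operator between
Hilbert spaces attains its norm: along a maximising sequence `zₙ` in the unit ball,
`T†T zₙ - ‖T‖² zₙ → 0`, so compactness of `T†T` makes a subsequence of `zₙ` converge. Applied
to `T` restricted to `H₀ᗮ`, a maximiser of norm `‖T‖` would lie in `M_T = S_{H₀}`, hence in
`H₀ ⊓ H₀ᗮ = ⊥`.
-/

open scoped RealInnerProductSpace InnerProduct
open Filter Topology Metric

theorem IsCompactOperator.isCompactOperator_id_of_isClosedEmbedding
    {M₁ M₂ : Type*} [Zero M₁] [TopologicalSpace M₁] [TopologicalSpace M₂] {f : M₁ → M₂}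
    (hf : IsCompactOperator f) (he : IsClosedEmbedding f) : IsCompactOperator (id : M₁ → M₁) :=
  let ⟨K, hK, hKf⟩ := hf
  ⟨f ⁻¹' K, he.isCompact_preimage hK, hKf⟩

theorem IsCompactOperator.finiteDimensional_of_antilipschitz
    {𝕜 E F : Type*} [NontriviallyNormedField 𝕜] [CompleteSpace 𝕜]
    [NormedAddCommGroup E] [NormedSpace 𝕜 E] [CompleteSpace E]
    [NormedAddCommGroup F] [NormedSpace 𝕜 F] {T : E →L[𝕜] F}
    (hT : IsCompactOperator T) {K : NNReal} (hK : AntilipschitzWith K T) :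
    FiniteDimensional 𝕜 E :=
  .of_isCompactOperator_id <|
    hT.isCompactOperator_id_of_isClosedEmbedding (hK.isClosedEmbedding T.uniformContinuous)

theorem ContinuousLinearMap.norm_apply_eq_mul_norm_of_forall_sphere
    {E F : Type*} [NormedAddCommGroup E] [NormedSpace ℝ E]
    [NormedAddCommGroup F] [NormedSpace ℝ F] (T : E →L[ℝ] F) {V : Submodule ℝ E} {c : ℝ}
    (h : ∀ u ∈ V, ‖u‖ = 1 → ‖T u‖ = c) {x : E} (hx : x ∈ V) : ‖T x‖ = c * ‖x‖ := by
  rcases eq_or_ne x 0 with rfl | hx0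
  · simp
  have hxpos : 0 < ‖x‖ := norm_pos_iff.mpr hx0
  have hu := h (‖x‖⁻¹ • x) (V.smul_mem _ hx) (by
    rw [norm_smul, norm_inv, norm_norm, inv_mul_cancel₀ hxpos.ne'])
  rw [map_smul, norm_smul, norm_inv, norm_norm] at hu
  rw [← hu]
  field_simp

theorem ContinuousLinearMap.exists_seq_norm_apply_tendsto_opNorm
    {E F : Type*} [NormedAddCommGroup E] [NormedSpace ℝ E]
    [NormedAddCommGroup F] [NormedSpace ℝ F] (T : E →L[ℝ] F) :
    ∃ z : ℕ → E, (∀ n, ‖z n‖ ≤ 1) ∧ Tendsto (fun n ↦ ‖T (z n)‖) atTop (𝓝 ‖T‖) := by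
  have hbdd : BddAbove ((fun x ↦ ‖T x‖) '' closedBall 0 1) := by
    refine ⟨‖T‖, ?_⟩
    rintro - ⟨x, hx, rfl⟩
    exact T.unit_le_opNorm x (mem_closedBall_zero_iff.1 hx)
  obtain ⟨u, -, hu, hmem⟩ :=
    exists_seq_tendsto_sSup ((nonempty_closedBall.mpr zero_le_one).image _) hbdd
  choose z hz hzu using hmem
  refine ⟨z, fun n ↦ mem_closedBall_zero_iff.1 (hz n), ?_⟩
  simpa only [hzu, T.sSup_unitClosedBall_eq_norm] using hu

theorem IsCompactOperator.exists_subseq_tendsto_of_tendsto_sub_smul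
    {𝕜 E : Type*} [NontriviallyNormedField 𝕜] [NormedAddCommGroup E] [NormedSpace 𝕜 E]
    {A : E →L[𝕜] E} (hA : IsCompactOperator A) {c : 𝕜} (hc : c ≠ 0) {z : ℕ → E} {r : ℝ}
    (hz : ∀ n, ‖z n‖ ≤ r) (h : Tendsto (fun n ↦ A (z n) - c • z n) atTop (𝓝 0)) :
    ∃ w, ∃ ψ : ℕ → ℕ, StrictMono ψ ∧ Tendsto (z ∘ ψ) atTop (𝓝 w) := by
  obtain ⟨y, -, ψ, hψ, hAy⟩ := (hA.isCompact_closure_image_closedBall r).tendsto_subseq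
    (x := fun n ↦ A (z n)) fun n ↦ subset_closure ⟨z n, mem_closedBall_zero_iff.2 (hz n), rfl⟩
  have hcz : Tendsto (fun n ↦ c • z (ψ n)) atTop (𝓝 y) := by
    simpa using hAy.sub (h.comp hψ.tendsto_atTop)
  refine ⟨c⁻¹ • y, ψ, hψ, ?_⟩
  simpa [Function.comp_def, inv_smul_smul₀ hc] using hcz.const_smul c⁻¹

section InnerProductSpace

variable {E F : Type*} [NormedAddCommGroup E] [InnerProductSpace ℝ E] [CompleteSpace E]
  [NormedAddCommGroup F] [InnerProductSpace ℝ F] [CompleteSpace F]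

theorem ContinuousLinearMap.norm_adjoint_comp_self_apply_sub_sq_le (T : E →L[ℝ] F) {x : E}
    (hx : ‖x‖ ≤ 1) :
    ‖(T† ∘L T) x - ‖T‖ ^ 2 • x‖ ^ 2 ≤ 2 * ‖T‖ ^ 2 * (‖T‖ ^ 2 - ‖T x‖ ^ 2) := by
  have hinner : ⟪(T† ∘L T) x, ‖T‖ ^ 2 • x⟫ = ‖T‖ ^ 2 * ‖T x‖ ^ 2 := by
    rw [real_inner_smul_right, ContinuousLinearMap.comp_apply,
      ContinuousLinearMap.adjoint_inner_left, real_inner_self_eq_norm_sq]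
  have hA : ‖(T† ∘L T) x‖ ≤ ‖T‖ ^ 2 := by
    calc ‖(T† ∘L T) x‖ ≤ ‖T† ∘L T‖ * ‖x‖ := le_opNorm _ _
      _ ≤ ‖T‖ ^ 2 := by
        rw [norm_adjoint_comp_self, ← sq]
        exact mul_le_of_le_one_right (by positivity) hx
  have hx' : ‖‖T‖ ^ 2 • x‖ ≤ ‖T‖ ^ 2 := by
    rw [norm_smul, Real.norm_of_nonneg (by positivity)]
    exact mul_le_of_le_one_right (by positivity) hx
  rw [norm_sub_sq_real, hinner]
  nlinarith [norm_nonneg ((T† ∘L T) x), norm_nonneg (‖T‖ ^ 2 • x)]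

theorem IsCompactOperator.exists_norm_le_one_norm_apply_eq_opNorm {T : E →L[ℝ] F}
    (hT : IsCompactOperator T) : ∃ x, ‖x‖ ≤ 1 ∧ ‖T x‖ = ‖T‖ := by
  rcases eq_or_ne T 0 with rfl | hT0
  · exact ⟨0, by simp⟩
  have hc : ‖T‖ ^ 2 ≠ 0 := by positivity
  obtain ⟨z, hz1, hzT⟩ := T.exists_seq_norm_apply_tendsto_opNorm
  have happrox : Tendsto (fun n ↦ (T† ∘L T) (z n) - ‖T‖ ^ 2 • z n) atTop (𝓝 0) := by
    rw [tendsto_zero_iff_norm_tendsto_zero]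
    have hbound : Tendsto (fun n ↦ 2 * ‖T‖ ^ 2 * (‖T‖ ^ 2 - ‖T (z n)‖ ^ 2)) atTop (𝓝 0) := by
      have := ((tendsto_const_nhds (x := ‖T‖ ^ 2)).sub (hzT.pow 2)).const_mul (2 * ‖T‖ ^ 2)
      rwa [sub_self, mul_zero] at this
    have hsq := squeeze_zero (fun n ↦ sq_nonneg _)
      (fun n ↦ T.norm_adjoint_comp_self_apply_sub_sq_le (hz1 n)) hbound
    simpa [Real.sqrt_sq (norm_nonneg _)] using hsq.sqrt
  obtain ⟨w, ψ, hψ, hzw⟩ := (hT.clm_comp (T†)).exists_subseq_tendsto_of_tendsto_sub_smul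
    hc hz1 happrox
  refine ⟨w, ?_, ?_⟩
  · exact le_of_tendsto' hzw.norm fun n ↦ hz1 (ψ n)
  · exact tendsto_nhds_unique ((T.continuous.tendsto w).comp hzw).norm
      (hzT.comp hψ.tendsto_atTop)

theorem IsCompactOperator.exists_norm_eq_one_norm_apply_eq_opNorm [Nontrivial E] {T : E →L[ℝ] F}
    (hT : IsCompactOperator T) : ∃ x, ‖x‖ = 1 ∧ ‖T x‖ = ‖T‖ := by
  rcases eq_or_ne T 0 with rfl | hT0
  · obtain ⟨x, hx⟩ := exists_norm_eq E zero_le_one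
    exact ⟨x, hx, by simp⟩
  obtain ⟨x, hx1, hTx⟩ := hT.exists_norm_le_one_norm_apply_eq_opNorm
  refine ⟨x, le_antisymm hx1 ?_, hTx⟩
  have := T.le_opNorm x
  rw [hTx] at this
  exact (le_mul_iff_one_le_right (norm_pos_iff.mpr hT0)).mp this

end InnerProductSpace

theorem IsCompactOperator.exists_isGreatest_norm_apply_submodule_sphere
    {E F : Type*} [NormedAddCommGroup E] [InnerProductSpace ℝ E]
    [NormedAddCommGroup F] [InnerProductSpace ℝ F] [CompleteSpace F]
    {T : E →L[ℝ] F} (hT : IsCompactOperator T) (K : Submodule ℝ E) [CompleteSpace K]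
    [Nontrivial K] :
    ∃ x ∈ K, ‖x‖ = 1 ∧ IsGreatest {r : ℝ | ∃ z ∈ K, ‖z‖ = 1 ∧ r = ‖T z‖} ‖T x‖ := by
  have hTK : IsCompactOperator (T ∘L K.subtypeL) := hT.comp_clm K.subtypeL
  obtain ⟨x, hx1, hTx⟩ := hTK.exists_norm_eq_one_norm_apply_eq_opNorm
  refine ⟨x, x.2, hx1, ⟨⟨x, x.2, hx1, rfl⟩, ?_⟩⟩
  rintro - ⟨z, hz, hz1, rfl⟩
  have := (T ∘L K.subtypeL).unit_le_opNorm ⟨z, hz⟩ hz1.le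
  rwa [← hTx] at this

/-- If `T` is a nonzero compact linear operator on a real Hilbert space whose norm
attainment set is the unit sphere of a closed subspace `H₀`, then `H₀` is finite
dimensional and the norm of `T` restricted to `H₀ᗮ` is strictly smaller than
`‖T‖`. -/
theorem compact_norm_attainment_finiteDimensional
    {H : Type*} [NormedAddCommGroup H] [InnerProductSpace ℝ H] [CompleteSpace H]
    (T : H →L[ℝ] H) (hT : IsCompactOperator T) (hT0 : T ≠ 0)
    (H₀ : Submodule ℝ H) (hclosed : IsClosed (H₀ : Set H))
    (hMT : {x : H | ‖x‖ = 1 ∧ ‖T x‖ = ‖T‖} = {x : H | x ∈ H₀ ∧ ‖x‖ = 1}) :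
    FiniteDimensional ℝ H₀ ∧
      sSup {r : ℝ | ∃ z ∈ H₀ᗮ, ‖z‖ = 1 ∧ r = ‖T z‖} < ‖T‖ := by
  have hTpos : 0 < ‖T‖ := norm_pos_iff.mpr hT0
  have hM (x : H) : (‖x‖ = 1 ∧ ‖T x‖ = ‖T‖) ↔ (x ∈ H₀ ∧ ‖x‖ = 1) := Set.ext_iff.mp hMT x
  have hnorm (x : H₀) : ‖T x‖ = ‖T‖ * ‖x‖ :=
    T.norm_apply_eq_mul_norm_of_forall_sphere (fun u hu hu1 ↦ ((hM u).2 ⟨hu, hu1⟩).2) x.2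
  have : CompleteSpace H₀ := hclosed.completeSpace_coe
  have hTH₀ : IsCompactOperator (T ∘L H₀.subtypeL) := hT.comp_clm H₀.subtypeL
  refine ⟨hTH₀.finiteDimensional_of_antilipschitz (K := ‖T‖₊⁻¹) ?_, ?_⟩
  · refine (T ∘L H₀.subtypeL).antilipschitz_of_bound fun x ↦ ?_
    rw [ContinuousLinearMap.comp_apply, Submodule.subtypeL_apply, hnorm, NNReal.coe_inv,
      coe_nnnorm, inv_mul_cancel_left₀ hTpos.ne']
  rcases subsingleton_or_nontrivial H₀ᗮ with hK | hK
  · have hempty : {r : ℝ | ∃ z ∈ H₀ᗮ, ‖z‖ = 1 ∧ r = ‖T z‖} = ∅ := by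
      refine Set.eq_empty_of_forall_notMem ?_
      rintro - ⟨z, hz, hz1, -⟩
      have hz0 : z = 0 := congrArg Subtype.val (Subsingleton.elim (⟨z, hz⟩ : H₀ᗮ) 0)
      simp [hz0] at hz1
    rwa [hempty, Real.sSup_empty]
  obtain ⟨x, hxK, hx1, hgreatest⟩ := hT.exists_isGreatest_norm_apply_submodule_sphere H₀ᗮ
  rw [hgreatest.csSup_eq]
  refine (T.unit_le_opNorm x hx1.le).lt_of_ne fun hTx ↦ ?_
  have hx0 : x = 0 := by
    simpa using H₀.inf_orthogonal_eq_bot.le ⟨((hM x).1 ⟨hx1, hTx⟩).1, hxK⟩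
  simp [hx0] at hx1
end

section
/- Let X be a reflexive real Banach space, Y a real normed space, and T, A : X → Y compact linear operators such that M_T = D ∪ (−D), where D is a nonempty compact connected subset of the unit sphere S_X, and suppose moreover M_T ⊆ M_A. Let ε ∈ [0,1). Then T ⊥_B^ε A if and only if there exists x ∈ M_T such that Tx ⊥_B^ε Ax, i.e., ‖Tx + λAx‖² ≥ ‖Tx‖² − 2ε‖Tx‖‖λAx‖ for all real λ. -/
/-!
Assume `T ⊥_B^ε A` and `T ≠ 0`. For `t > 0` the compact operator `T + tA` attains its norm at
some `x_t` (reflexivity), and convexity of `s ↦ ‖T x_t + s A x_t‖` carries the inequality at `t`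
over to all `s ≥ t`. Letting `t → 0⁺` along a subsequence yields a point of `M_T ⊆ M_A` at which
`Tx ⊥_B^ε Ax` holds for all `λ ≥ 0`; replacing `A` by `-A` gives one for `λ ≤ 0`. By symmetry
of `M_T = D ∪ -D` both points may be taken in `D`. The two one-sided conditions define closed
sets, and they cover `X` because `λ ↦ ‖Tx + λAx‖` cannot drop strictly below `‖Tx‖` on both sides
of `0`. As `D` is connected, they meet in `D`, which gives the required `x`.
-/

open Filter Metric Topology

section BirkhoffOrth

variable {E : Type*} [SeminormedAddCommGroup E] [NormedSpace ℝ E] {ε : ℝ} {u v : E}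

/-- `ApproxBirkhoffOrth ε u v` is `u ⊥_B^ε v`; `ApproxBirkhoffOrthRight` only tests `λ ≥ 0`. -/
def ApproxBirkhoffOrth (ε : ℝ) (u v : E) : Prop :=
  ∀ l : ℝ, ‖u + l • v‖ ^ 2 ≥ ‖u‖ ^ 2 - 2 * ε * ‖u‖ * ‖l • v‖

def ApproxBirkhoffOrthRight (ε : ℝ) (u v : E) : Prop :=
  ∀ s : ℝ, 0 ≤ s → ‖u + s • v‖ ^ 2 ≥ ‖u‖ ^ 2 - 2 * ε * ‖u‖ * ‖s • v‖

theorem approxBirkhoffOrth_iff_right_and_right_neg :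
    ApproxBirkhoffOrth ε u v ↔
      ApproxBirkhoffOrthRight ε u v ∧ ApproxBirkhoffOrthRight ε u (-v) := by
  refine ⟨fun h => ⟨fun s _ => h s, fun s _ => by simpa using h (-s)⟩, fun ⟨hpos, hneg⟩ l => ?_⟩
  rcases le_total 0 l with hl | hl
  · exact hpos l hl
  · simpa using hneg (-l) (neg_nonneg.2 hl)

theorem ApproxBirkhoffOrth.neg_right (h : ApproxBirkhoffOrth ε u v) :
    ApproxBirkhoffOrth ε u (-v) :=
  fun l => by simpa using h (-l)

theorem ApproxBirkhoffOrthRight.neg (h : ApproxBirkhoffOrthRight ε u v) :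
    ApproxBirkhoffOrthRight ε (-u) (-v) :=
  fun s hs => by simpa only [smul_neg, ← neg_add, norm_neg] using h s hs

theorem approxBirkhoffOrth_zero_left (ε : ℝ) (v : E) : ApproxBirkhoffOrth ε 0 v :=
  fun l => by simp

theorem norm_le_max_norm_add_smul_norm_sub_smul (u v : E) {a b : ℝ} (ha : 0 ≤ a) (hb : 0 ≤ b) :
    ‖u‖ ≤ max ‖u + a • v‖ ‖u - b • v‖ := by
  rcases ha.eq_or_lt with rfl | ha
  · simp
  rcases hb.eq_or_lt with rfl | hb
  · simp
  have hconv : (a + b) * ‖u‖ ≤ b * ‖u + a • v‖ + a * ‖u - b • v‖ :=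
    calc (a + b) * ‖u‖ = ‖b • (u + a • v) + a • (u - b • v)‖ := by
          rw [show b • (u + a • v) + a • (u - b • v) = (a + b) • u by module, norm_smul,
            Real.norm_of_nonneg (by positivity)]
      _ ≤ b * ‖u + a • v‖ + a * ‖u - b • v‖ := by
          refine (norm_add_le _ _).trans_eq ?_
          rw [norm_smul, norm_smul, Real.norm_of_nonneg hb.le, Real.norm_of_nonneg ha.le]
  by_contra! h
  rw [max_lt_iff] at h
  nlinarith

theorem exists_norm_add_smul_lt_of_not_approxBirkhoffOrthRight (hε : 0 ≤ ε)
    (h : ¬ ApproxBirkhoffOrthRight ε u v) : ∃ a : ℝ, 0 ≤ a ∧ ‖u + a • v‖ < ‖u‖ := by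
  simp only [ApproxBirkhoffOrthRight, not_forall, not_le] at h
  obtain ⟨a, ha, hlt⟩ := h
  refine ⟨a, ha, lt_of_pow_lt_pow_left₀ 2 (norm_nonneg u) (hlt.trans_le ?_)⟩
  have : 0 ≤ 2 * ε * ‖u‖ * ‖a • v‖ := by positivity
  linarith

theorem approxBirkhoffOrthRight_or_neg (hε : 0 ≤ ε) (u v : E) :
    ApproxBirkhoffOrthRight ε u v ∨ ApproxBirkhoffOrthRight ε u (-v) := by
  by_contra! h
  obtain ⟨a, ha, hav⟩ := exists_norm_add_smul_lt_of_not_approxBirkhoffOrthRight hε h.1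
  obtain ⟨b, hb, hbv⟩ := exists_norm_add_smul_lt_of_not_approxBirkhoffOrthRight hε h.2
  rw [smul_neg, ← sub_eq_add_neg] at hbv
  exact (norm_le_max_norm_add_smul_norm_sub_smul u v ha hb).not_gt (max_lt hav hbv)

theorem isClosed_setOf_approxBirkhoffOrthRight {Z : Type*} [TopologicalSpace Z] {f g : Z → E}
    (hf : Continuous f) (hg : Continuous g) (ε : ℝ) :
    IsClosed {z | ApproxBirkhoffOrthRight ε (f z) (g z)} := by
  simp only [ApproxBirkhoffOrthRight, Set.ofPred_forall]
  exact isClosed_iInter fun s => isClosed_iInter fun _ => isClosed_le (by fun_prop) (by fun_prop)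

theorem sq_sub_mul_le_sq_norm_add_smul_of_le {M K t s : ℝ} (hu : ‖u‖ ≤ M) (ht : 0 < t)
    (hts : t ≤ s) (h : M ^ 2 - t * K ≤ ‖u + t • v‖ ^ 2) :
    M ^ 2 - s * K ≤ ‖u + s • v‖ ^ 2 := by
  have hs : 0 < s := ht.trans_le hts
  have hconv : s * ‖u + t • v‖ ≤ (s - t) * ‖u‖ + t * ‖u + s • v‖ :=
    calc s * ‖u + t • v‖ = ‖(s - t) • u + t • (u + s • v)‖ := by
          rw [show (s - t) • u + t • (u + s • v) = s • (u + t • v) by module, norm_smul,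
            Real.norm_of_nonneg hs.le]
      _ ≤ (s - t) * ‖u‖ + t * ‖u + s • v‖ := by
          refine (norm_add_le _ _).trans_eq ?_
          rw [norm_smul, norm_smul, Real.norm_of_nonneg (sub_nonneg.2 hts),
            Real.norm_of_nonneg ht.le]
  have hjensen : ((s - t) * ‖u‖ + t * ‖u + s • v‖) ^ 2
      ≤ s * ((s - t) * ‖u‖ ^ 2 + t * ‖u + s • v‖ ^ 2) := by
    nlinarith [mul_nonneg (mul_nonneg (sub_nonneg.2 hts) ht.le) (sq_nonneg (‖u‖ - ‖u + s • v‖))]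
  have hsq : s * ‖u + t • v‖ ^ 2 ≤ (s - t) * M ^ 2 + t * ‖u + s • v‖ ^ 2 := by
    have hc := pow_le_pow_left₀ (by positivity) hconv 2
    have hM := mul_le_mul_of_nonneg_left (pow_le_pow_left₀ (norm_nonneg u) hu 2) (sub_nonneg.2 hts)
    nlinarith
  nlinarith

end BirkhoffOrth

theorem IsCompactOperator.prodMk {M₁ M₂ M₃ : Type*} [Zero M₁] [TopologicalSpace M₁]
    [TopologicalSpace M₂] [TopologicalSpace M₃] {f : M₁ → M₂} {g : M₁ → M₃}
    (hf : IsCompactOperator f) (hg : IsCompactOperator g) :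
    IsCompactOperator fun x => (f x, g x) := by
  obtain ⟨K, hK, hfK⟩ := hf
  obtain ⟨L, hL, hgL⟩ := hg
  exact ⟨K ×ˢ L, hK.prod hL, inter_mem hfK hgL⟩

section Operator

variable {X Y Z : Type*} [NormedAddCommGroup X] [NormedSpace ℝ X]
  [NormedAddCommGroup Y] [NormedSpace ℝ Y] [NormedAddCommGroup Z] [NormedSpace ℝ Z]

/-- Weak-star compactness of the bidual ball (Banach–Alaoglu) pulled back along the canonical
embedding, which is onto by reflexivity. -/
theorem exists_apply_eq_of_tendsto_of_reflexive
    (hrefl : Function.Surjective (NormedSpace.inclusionInDoubleDual ℝ X))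
    (S : X →L[ℝ] Z) {x : ℕ → X} (hx : ∀ n, ‖x n‖ ≤ 1) {w : Z}
    (hw : Tendsto (fun n => S (x n)) atTop (𝓝 w)) :
    ∃ x₀ : X, ‖x₀‖ ≤ 1 ∧ S x₀ = w := by
  set J := NormedSpace.inclusionInDoubleDual ℝ X
  have hJ : ∀ y, ‖J y‖ = ‖y‖ := (NormedSpace.inclusionInDoubleDualLi ℝ (E := X)).norm_map
  let u : ℕ → WeakDual ℝ (StrongDual ℝ X) := fun n => StrongDual.toWeakDual (J (x n))
  have hu : ∀ n, u n ∈ WeakDual.toStrongDual ⁻¹' closedBall 0 1 := fun n =>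
    (mem_closedBall_zero_iff (E := StrongDual ℝ (StrongDual ℝ X))).2 ((hJ _).trans_le (hx n))
  obtain ⟨Λ, hΛ, hclust⟩ := (WeakDual.isCompact_closedBall (𝕜 := ℝ)
    (0 : StrongDual ℝ (StrongDual ℝ X)) 1).exists_mapClusterPt (f := atTop)
    (tendsto_principal.2 (Eventually.of_forall hu))
  obtain ⟨x₀, hx₀⟩ := hrefl (WeakDual.toStrongDual Λ)
  have hx₀1 : ‖x₀‖ ≤ 1 := by
    rw [← hJ, hx₀]
    exact (mem_closedBall_zero_iff (E := StrongDual ℝ (StrongDual ℝ X))).1 hΛ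
  refine ⟨x₀, hx₀1, (SeparatingDual.eq_iff_forall_dual_eq (R := ℝ)).2 fun g => ?_⟩
  have hcl : MapClusterPt (Λ (g.comp S)) atTop (fun n => u n (g.comp S)) :=
    hclust.continuousAt_comp (f := fun Φ : WeakDual ℝ (StrongDual ℝ X) => Φ (g.comp S))
      (WeakDual.eval_continuous (g.comp S)).continuousAt
  -- `u n (g ∘ S) = g (S (x n))` holds definitionally.
  have hlim : Tendsto (fun n => u n (g.comp S)) atTop (𝓝 (g w)) := (g.continuous.tendsto w).comp hw
  have hΛg : Λ (g.comp S) = g w := eq_of_nhds_neBot (hcl.neBot.mono (inf_le_inf_left _ hlim))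
  exact (congrArg (fun Φ : StrongDual ℝ (StrongDual ℝ X) => Φ (g.comp S)) hx₀).trans hΛg

theorem IsCompactOperator.exists_subseq_tendsto_apply
    (hrefl : Function.Surjective (NormedSpace.inclusionInDoubleDual ℝ X))
    {S : X →L[ℝ] Z} (hS : IsCompactOperator S) {x : ℕ → X} (hx : ∀ n, ‖x n‖ ≤ 1) :
    ∃ x₀ : X, ‖x₀‖ ≤ 1 ∧ ∃ φ : ℕ → ℕ, StrictMono φ ∧
      Tendsto (fun k => S (x (φ k))) atTop (𝓝 (S x₀)) := by
  obtain ⟨K, hK, hSK⟩ := hS.image_closedBall_subset_compact (f := (S : X →ₗ[ℝ] Z)) 1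
  obtain ⟨w, -, φ, hφ, hw⟩ := hK.tendsto_subseq fun n =>
    hSK ⟨x n, by simpa using hx n, rfl⟩
  obtain ⟨x₀, hx₀, rfl⟩ := exists_apply_eq_of_tendsto_of_reflexive hrefl S (fun k => hx (φ k)) hw
  exact ⟨x₀, hx₀, φ, hφ, hw⟩

theorem IsCompactOperator.exists_norm_apply_eq_opNorm
    (hrefl : Function.Surjective (NormedSpace.inclusionInDoubleDual ℝ X))
    {S : X →L[ℝ] Z} (hS : IsCompactOperator S) : ∃ x : X, ‖x‖ ≤ 1 ∧ ‖S x‖ = ‖S‖ := by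
  choose x hx hSx using fun n : ℕ =>
    S.exists_lt_apply_of_lt_opNorm (r := ‖S‖ - 1 / (n + 1)) (by simp; positivity)
  obtain ⟨x₀, hx₀, φ, hφ, hlim⟩ := hS.exists_subseq_tendsto_apply hrefl fun n => (hx n).le
  refine ⟨x₀, hx₀, (S.unit_le_opNorm _ hx₀).antisymm ?_⟩
  have hgap : Tendsto (fun k => ‖S‖ - 1 / ((φ k : ℝ) + 1)) atTop (𝓝 ‖S‖) := by
    simpa using (tendsto_const_nhds (x := ‖S‖)).sub
      (tendsto_one_div_add_atTop_nhds_zero_nat.comp hφ.tendsto_atTop)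
  exact le_of_tendsto_of_tendsto' hgap hlim.norm fun k => (hSx (φ k)).le

def normAttainSet (T : X →L[ℝ] Y) : Set X := {x | ‖x‖ = 1 ∧ ‖T x‖ = ‖T‖}

theorem normAttainSet_neg (T : X →L[ℝ] Y) : normAttainSet (-T) = normAttainSet T := by
  simp [normAttainSet]

theorem exists_norm_apply_eq_opNorm_forall_nonneg_sq_sub_mul_le
    (hrefl : Function.Surjective (NormedSpace.inclusionInDoubleDual ℝ X))
    {T A : X →L[ℝ] Y} (hT : IsCompactOperator T) (hA : IsCompactOperator A) {K : ℝ}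
    (h : ∀ t : ℝ, 0 < t → ‖T‖ ^ 2 - t * K ≤ ‖T + t • A‖ ^ 2) :
    ∃ x : X, ‖x‖ ≤ 1 ∧ ‖T x‖ = ‖T‖ ∧ ∀ s : ℝ, 0 ≤ s → ‖T‖ ^ 2 - s * K ≤ ‖T x + s • A x‖ ^ 2 := by
  set t : ℕ → ℝ := fun n => 1 / (n + 1)
  have ht : ∀ n, 0 < t n := fun n => by positivity
  choose x hx hxB using fun n => (hT.add (hA.smul (t n))).exists_norm_apply_eq_opNorm hrefl
    (S := T + t n • A)
  simp only [add_apply, smul_apply] at hxB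
  obtain ⟨x₀, hx₀, φ, hφ, hlim⟩ := (hT.prodMk hA).exists_subseq_tendsto_apply hrefl
    (S := T.prod A) hx
  have hTlim : Tendsto (fun k => T (x (φ k))) atTop (𝓝 (T x₀)) := hlim.fst_nhds
  have hAlim : Tendsto (fun k => A (x (φ k))) atTop (𝓝 (A x₀)) := hlim.snd_nhds
  have htφ : Tendsto (fun k => t (φ k)) atTop (𝓝 0) :=
    tendsto_one_div_add_atTop_nhds_zero_nat.comp hφ.tendsto_atTop
  have hTx₀ : ‖T x₀‖ = ‖T‖ := by
    have hc : Continuous fun r : ℝ => ‖T + r • A‖ := by fun_prop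
    have hnorm : Tendsto (fun r : ℝ => ‖T + r • A‖) (𝓝 0) (𝓝 ‖T‖) := by simpa using hc.tendsto 0
    refine tendsto_nhds_unique ?_ (hnorm.comp htφ)
    simpa [hxB, Function.comp_def] using (hTlim.add (htφ.smul hAlim)).norm
  refine ⟨x₀, hx₀, hTx₀, fun s hs => ?_⟩
  rcases hs.eq_or_lt with rfl | hs
  · simp [hTx₀]
  refine ge_of_tendsto ((hTlim.add (hAlim.const_smul s)).norm.pow 2) ?_
  filter_upwards [htφ.eventually (gt_mem_nhds hs)] with k hk
  exact sq_sub_mul_le_sq_norm_add_smul_of_le (T.unit_le_opNorm _ (hx _)) (ht _) hk.le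
    (hxB (φ k) ▸ h _ (ht _))

theorem ApproxBirkhoffOrth.exists_mem_normAttainSet_right
    (hrefl : Function.Surjective (NormedSpace.inclusionInDoubleDual ℝ X))
    {T A : X →L[ℝ] Y} (hT : IsCompactOperator T) (hA : IsCompactOperator A)
    (hsub : normAttainSet T ⊆ normAttainSet A) (hT0 : T ≠ 0) {ε : ℝ}
    (h : ApproxBirkhoffOrth ε T A) :
    ∃ x ∈ normAttainSet T, ApproxBirkhoffOrthRight ε (T x) (A x) := by
  obtain ⟨x, hx1, hxT, hray⟩ := exists_norm_apply_eq_opNorm_forall_nonneg_sq_sub_mul_le hrefl hT hA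
    (K := 2 * ε * ‖T‖ * ‖A‖) fun t ht => by
      have := h t
      rw [norm_smul, Real.norm_of_nonneg ht.le] at this
      linarith
  have hx : x ∈ normAttainSet T := by
    refine ⟨hx1.antisymm ?_, hxT⟩
    have := T.le_opNorm x
    rwa [hxT, le_mul_iff_one_le_right (norm_pos_iff.2 hT0)] at this
  refine ⟨x, hx, fun s hs => ?_⟩
  rw [hxT, norm_smul, (hsub hx).2, Real.norm_of_nonneg hs]
  linarith [hray s hs]

theorem ApproxBirkhoffOrth.of_apply {T A : X →L[ℝ] Y} {x : X} {ε : ℝ} (hε : 0 ≤ ε)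
    (hx : ‖x‖ ≤ 1) (hTx : ‖T x‖ = ‖T‖) (h : ApproxBirkhoffOrth ε (T x) (A x)) :
    ApproxBirkhoffOrth ε T A := fun l => by
  have hB : ‖T x + l • A x‖ ≤ ‖T + l • A‖ := (T + l • A).unit_le_opNorm x hx
  have hlA : ‖l • A x‖ ≤ ‖l • A‖ := (l • A).unit_le_opNorm x hx
  have := h l
  rw [hTx] at this
  nlinarith [norm_nonneg (T x + l • A x), mul_le_mul_of_nonneg_left hlA
    (by positivity : 0 ≤ 2 * ε * ‖T‖)]

end Operator

theorem approx_B_orth_iff_pointwise_of_norm_attainment_symmetric_connected_general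
    {X Y : Type*} [NormedAddCommGroup X] [NormedSpace ℝ X]
    [NormedAddCommGroup Y] [NormedSpace ℝ Y]
    (hrefl : Function.Surjective (NormedSpace.inclusionInDoubleDual ℝ X))
    (T A : X →L[ℝ] Y) (hT : IsCompactOperator T) (hA : IsCompactOperator A)
    (D : Set X) (hDne : D.Nonempty) (hDconn : IsConnected D)
    (hMT : {x : X | ‖x‖ = 1 ∧ ‖T x‖ = ‖T‖} = D ∪ (-D))
    (hsubset : {x : X | ‖x‖ = 1 ∧ ‖T x‖ = ‖T‖} ⊆ {x : X | ‖x‖ = 1 ∧ ‖A x‖ = ‖A‖})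
    (ε : ℝ) (hε0 : 0 ≤ ε) :
    (∀ l : ℝ, ‖T + l • A‖ ^ 2 ≥ ‖T‖ ^ 2 - 2 * ε * ‖T‖ * ‖l • A‖) ↔
      ∃ x : X, ‖x‖ = 1 ∧ ‖T x‖ = ‖T‖ ∧
        ∀ l : ℝ, ‖T x + l • A x‖ ^ 2 ≥ ‖T x‖ ^ 2 - 2 * ε * ‖T x‖ * ‖l • A x‖ := by
  show ApproxBirkhoffOrth ε T A ↔
    ∃ x, ‖x‖ = 1 ∧ ‖T x‖ = ‖T‖ ∧ ApproxBirkhoffOrth ε (T x) (A x)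
  replace hMT : normAttainSet T = D ∪ -D := hMT
  replace hsubset : normAttainSet T ⊆ normAttainSet A := hsubset
  refine ⟨fun h => ?_, fun ⟨x, hx1, hxT, hx⟩ => hx.of_apply hε0 hx1.le hxT⟩
  rcases eq_or_ne T 0 with rfl | hT0
  · obtain ⟨x, hxD⟩ := hDne
    obtain ⟨hx1, -⟩ : x ∈ normAttainSet (0 : X →L[ℝ] Y) := hMT ▸ Or.inl hxD
    exact ⟨x, hx1, by simp, by simpa using approxBirkhoffOrth_zero_left ε (A x)⟩
  have hray : ∀ B : X →L[ℝ] Y, IsCompactOperator B → normAttainSet T ⊆ normAttainSet B →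
      ApproxBirkhoffOrth ε T B → ∃ x ∈ D, ApproxBirkhoffOrthRight ε (T x) (B x) := by
    intro B hB hsubB hTB
    obtain ⟨x, hx, hxB⟩ := hTB.exists_mem_normAttainSet_right hrefl hT hB hsubB hT0
    rcases hMT ▸ hx with hxD | hxD
    · exact ⟨x, hxD, hxB⟩
    · exact ⟨-x, hxD, by simpa using hxB.neg⟩
  obtain ⟨p, hpD, hp⟩ := hray A hA hsubset h
  obtain ⟨q, hqD, hq⟩ := hray (-A) hA.neg (by rwa [normAttainSet_neg]) h.neg_right
  obtain ⟨z, hzD, hzA, hzA'⟩ := isPreconnected_closed_iff.1 hDconn.isPreconnected _ _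
    (isClosed_setOf_approxBirkhoffOrthRight T.continuous A.continuous ε)
    (isClosed_setOf_approxBirkhoffOrthRight T.continuous (-A).continuous ε)
    (fun x _ => approxBirkhoffOrthRight_or_neg hε0 (T x) (A x)) ⟨p, hpD, hp⟩ ⟨q, hqD, hq⟩
  obtain ⟨hz1, hzT⟩ : z ∈ normAttainSet T := hMT ▸ Or.inl hzD
  exact ⟨z, hz1, hzT, approxBirkhoffOrth_iff_right_and_right_neg.2 ⟨hzA, hzA'⟩⟩

/-- Characterization of `T ⊥_B^ε A` for compact operators on a reflexive Banach
space whose norm attainment set has the form `D ∪ (-D)` with `D` a nonempty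
compact connected subset of the unit sphere, under the extra assumption
`M_T ⊆ M_A`: `T ⊥_B^ε A` iff `Tx ⊥_B^ε Ax` for some `x ∈ M_T`. -/
theorem approx_B_orth_iff_pointwise_of_norm_attainment_symmetric_connected
    {X Y : Type*} [NormedAddCommGroup X] [NormedSpace ℝ X] [CompleteSpace X]
    [NormedAddCommGroup Y] [NormedSpace ℝ Y]
    (hrefl : Function.Surjective (NormedSpace.inclusionInDoubleDual ℝ X))
    (T A : X →L[ℝ] Y) (hT : IsCompactOperator T) (hA : IsCompactOperator A)
    (D : Set X) (hDne : D.Nonempty) (hDcpt : IsCompact D) (hDconn : IsConnected D)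
    (hDsphere : D ⊆ {x : X | ‖x‖ = 1})
    (hMT : {x : X | ‖x‖ = 1 ∧ ‖T x‖ = ‖T‖} = D ∪ (-D))
    (hsubset : {x : X | ‖x‖ = 1 ∧ ‖T x‖ = ‖T‖} ⊆ {x : X | ‖x‖ = 1 ∧ ‖A x‖ = ‖A‖})
    (ε : ℝ) (hε0 : 0 ≤ ε) (hε1 : ε < 1) :
    (∀ l : ℝ, ‖T + l • A‖ ^ 2 ≥ ‖T‖ ^ 2 - 2 * ε * ‖T‖ * ‖l • A‖) ↔
      ∃ x : X, ‖x‖ = 1 ∧ ‖T x‖ = ‖T‖ ∧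
        ∀ l : ℝ, ‖T x + l • A x‖ ^ 2 ≥ ‖T x‖ ^ 2 - 2 * ε * ‖T x‖ * ‖l • A x‖ :=
  approx_B_orth_iff_pointwise_of_norm_attainment_symmetric_connected_general hrefl T A hT hA D hDne
    hDconn hMT hsubset ε hε0
end

section
/- Let X, Y be real normed spaces, let T : X → Y be a nonzero bounded linear operator, let A : X → Y be a bounded linear operator, and let ε ∈ [0,1). Then T ⊥_B^ε A if and only if either (a) there exists a sequence {x_n} of unit vectors in X such that ‖Tx_n‖ → ‖T‖ and lim_{n→∞} ‖Ax_n‖ ≤ ε‖A‖, or (b) there exist two sequences {x_n}, {y_n} of unit vectors in X and two sequences of positive real numbers {ε_n}, {δ_n} such that (i) ε_n → 0, δ_n → 0, ‖Tx_n‖ → ‖T‖, ‖Ty_n‖ → ‖T‖ as n → ∞; (ii) ‖Tx_n + λAx_n‖² ≥ (1 − ε_n²)‖Tx_n‖² − 2ε√(1 − ε_n²)‖Tx_n‖‖λA‖ for all λ ≥ 0 and all n; and (iii) ‖Ty_n + λAy_n‖² ≥ (1 − δ_n²)‖Ty_n‖² − 2ε√(1 − δ_n²)‖Ty_n‖‖λA‖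 for all λ ≤ 0 and all n. -/
/-!
The converse implications are limits: along the given unit vectors each condition bounds
`‖T + l • A‖` from below, and the bounds converge to the required one after the elementary step
`M - w ≤ N → M ^ 2 - 2 * M * w ≤ N ^ 2`.

For the forward implication, either for every `θ > 0` there are unit vectors `x` with
`‖T x‖ ≥ ‖T‖ - θ` and `‖A x‖ ≤ ε * ‖A‖ + θ`, and compactness of `[0, ‖A‖]` gives (a), or
`‖A x‖ ≥ γ` for some `γ > 0` and all unit vectors `x` with `‖T x‖ ≥ ‖T‖ - γ`. In the second case take `x` almost norming `T + p • A` for a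
small `p > 0`. Orthogonality gives `‖T x + p • A x‖ ≥ ‖T‖ - ε * p * ‖A‖ - O(p ^ 2)`, and
convexity of `l ↦ ‖T x + l • A x‖` spreads this to
`‖T x + l • A x‖ ≥ (1 - c) * ‖T x‖ - ε * l * ‖A‖` for all `l ≥ 0`, where `‖A x‖ ≥ γ` takes
care of large `l`. With `1 - c = √(1 - e ^ 2)` this is (ii); applied to `-A` it is (iii).
-/

open Filter Topology

theorem sq_sub_two_mul_le_sq_of_sub_le {M N w : ℝ} (hM : 0 ≤ M) (hw : 0 ≤ w)
    (h : M - w ≤ N) : M ^ 2 - 2 * M * w ≤ N ^ 2 := by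
  rcases le_total w M with hwM | hMw
  · nlinarith [mul_self_le_mul_self (sub_nonneg.2 hwM) h]
  · nlinarith

theorem sub_sub_sq_div_le_of_sq_sub_le {M N w ε : ℝ} (hM : 0 < M) (hε : 0 ≤ ε) (hw : 0 ≤ w)
    (hMN : M - w ≤ N) (hsq : M ^ 2 - 2 * ε * M * w ≤ N ^ 2) :
    M - ε * w - w ^ 2 / (2 * M) ≤ N := by
  rcases le_total M N with hMN' | hNM
  · have : 0 ≤ ε * w + w ^ 2 / (2 * M) := by positivity
    linarith
  · have hd : (M - N) ^ 2 ≤ w ^ 2 := pow_le_pow_left₀ (sub_nonneg.2 hNM) (by linarith) 2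
    have : 2 * M * (M - ε * w - w ^ 2 / (2 * M)) ≤ 2 * M * N := by
      rw [mul_sub, mul_div_cancel₀ _ (by positivity)]
      nlinarith
    exact le_of_mul_le_mul_left this (by positivity)

section NormedSpace

variable {E : Type*} [SeminormedAddCommGroup E] [NormedSpace ℝ E]

theorem mul_norm_add_smul_le (u v : E) {p l : ℝ} (hp : 0 ≤ p) (hpl : p ≤ l) :
    l * ‖u + p • v‖ ≤ (l - p) * ‖u‖ + p * ‖u + l • v‖ := by
  calc l * ‖u + p • v‖ = ‖l • (u + p • v)‖ := by
        rw [norm_smul, Real.norm_of_nonneg (hp.trans hpl)]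
    _ = ‖(l - p) • u + p • (u + l • v)‖ := by congr 1; module
    _ ≤ (l - p) * ‖u‖ + p * ‖u + l • v‖ := by
        refine (norm_add_le _ _).trans_eq ?_
        rw [norm_smul, norm_smul, Real.norm_of_nonneg (sub_nonneg.2 hpl), Real.norm_of_nonneg hp]

theorem one_sub_mul_norm_sub_le_norm_add_smul {u v : E} {M a ε γ p η c l : ℝ}
    (hu : ‖u‖ ≤ M) (hv : ‖v‖ ≤ a) (hγ : 0 < γ) (hγv : γ ≤ ‖v‖) (hε : 0 ≤ ε) (hp : 0 < p)
    (hup : M - ε * p * a - η ≤ ‖u + p • v‖) (hc₁ : p * a ≤ c * ‖u‖)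
    (hc₂ : 2 * M * η ≤ c * ‖u‖ * γ * p) (hl : 0 ≤ l) :
    (1 - c) * ‖u‖ - ε * l * a ≤ ‖u + l • v‖ := by
  have ha : 0 ≤ a := (norm_nonneg v).trans hv
  have hεla : 0 ≤ ε * l * a := by positivity
  have hcu : 0 ≤ c * ‖u‖ := (mul_nonneg hp.le ha).trans hc₁
  have hlv : ‖l • v‖ = l * ‖v‖ := by rw [norm_smul, Real.norm_of_nonneg hl]
  rcases le_total l p with hlp | hpl
  · have hlower : ‖u‖ - l * ‖v‖ ≤ ‖u + l • v‖ := hlv ▸ norm_sub_le_norm_add u (l • v)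
    have : l * ‖v‖ ≤ p * a := mul_le_mul hlp hv (norm_nonneg v) hp.le
    linarith
  have hslope : p * (M - ε * l * a) - l * η ≤ p * ‖u + l • v‖ := by
    linarith [mul_norm_add_smul_le u v hp.le hpl, mul_le_mul_of_nonneg_left hup hl,
      mul_le_mul_of_nonneg_left hu (sub_nonneg.2 hpl)]
  by_cases hη : l * η ≤ c * ‖u‖ * p
  · refine le_of_mul_le_mul_left ?_ hp
    nlinarith
  -- `l` is so large that `l • v` dominates `u`
  replace hη := not_le.mp hη
  have hη0 : 0 < η := pos_of_mul_pos_right ((mul_nonneg hcu hp.le).trans_lt hη) hl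
  have hlγ : 2 * M < l * γ := by
    refine lt_of_mul_lt_mul_right ?_ hη0.le
    nlinarith
  have hupper : l * ‖v‖ - ‖u‖ ≤ ‖u + l • v‖ := by
    simpa [hlv, add_comm] using norm_sub_le_norm_add (l • v) u
  nlinarith [mul_le_mul_of_nonneg_left hγv hl]

end NormedSpace

section Operator

variable {X Y : Type*} [NormedAddCommGroup X] [NormedSpace ℝ X]
  [NormedAddCommGroup Y] [NormedSpace ℝ Y]

theorem ContinuousLinearMap.exists_norm_eq_one_lt_apply [Nontrivial X] (S : X →L[ℝ] Y) {r : ℝ}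
    (hr : r < ‖S‖) : ∃ x, ‖x‖ = 1 ∧ r < ‖S x‖ := by
  have hne : (Metric.sphere (0 : X) 1).Nonempty := NormedSpace.sphere_nonempty.2 zero_le_one
  obtain ⟨_, ⟨x, hx, rfl⟩, hlt⟩ := exists_lt_of_lt_csSup (hne.image _) (S.sSup_sphere_eq_norm ▸ hr)
  exact ⟨x, mem_sphere_zero_iff_norm.1 hx, hlt⟩

theorem ContinuousLinearMap.norm_apply_add_smul_le (T A : X →L[ℝ] Y) {x : X} (hx : ‖x‖ = 1)
    (l : ℝ) : ‖T x + l • A x‖ ≤ ‖T + l • A‖ := by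
  simpa using (T + l • A).unit_le_opNorm x hx.le

theorem ContinuousLinearMap.tendsto_norm_apply_of_sub_le (T : X →L[ℝ] Y) {x : ℕ → X}
    (hx : ∀ n, ‖x n‖ = 1) (hTx : ∀ n : ℕ, ‖T‖ - 1 / ((n : ℝ) + 1) ≤ ‖T (x n)‖) :
    Tendsto (fun n => ‖T (x n)‖) atTop (𝓝 ‖T‖) :=
  tendsto_of_tendsto_of_tendsto_of_le_of_le
    (by simpa using tendsto_one_div_add_atTop_nhds_zero_nat.const_sub ‖T‖)
    tendsto_const_nhds hTx fun n => T.unit_le_opNorm _ (hx n).le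

theorem exists_seq_tendsto_of_forall_exists_le (T A : X →L[ℝ] Y) {b : ℝ}
    (h : ∀ θ > 0, ∃ x, ‖x‖ = 1 ∧ ‖T‖ - θ ≤ ‖T x‖ ∧ ‖A x‖ ≤ b + θ) :
    ∃ x : ℕ → X, (∀ n, ‖x n‖ = 1) ∧ Tendsto (fun n => ‖T (x n)‖) atTop (𝓝 ‖T‖) ∧
      ∃ L, Tendsto (fun n => ‖A (x n)‖) atTop (𝓝 L) ∧ L ≤ b := by
  choose x hx hTx hAx using fun n : ℕ => h (1 / ((n : ℝ) + 1)) Nat.one_div_pos_of_nat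
  obtain ⟨L, -, φ, hφ, hL⟩ := isCompact_Icc.tendsto_subseq fun n =>
    (⟨norm_nonneg _, A.unit_le_opNorm _ (hx n).le⟩ : ‖A (x n)‖ ∈ Set.Icc 0 ‖A‖)
  refine ⟨x ∘ φ, fun n => hx _,
    (T.tendsto_norm_apply_of_sub_le hx hTx).comp hφ.tendsto_atTop, L, hL, ?_⟩
  have hb : Tendsto (fun n => b + 1 / ((φ n : ℝ) + 1)) atTop (𝓝 b) := by
    simpa using (tendsto_one_div_add_atTop_nhds_zero_nat.comp hφ.tendsto_atTop).const_add b
  exact le_of_tendsto_of_tendsto' hL hb fun n => hAx (φ n)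

variable {T A : X →L[ℝ] Y} {ε : ℝ}

theorem exists_norm_eq_one_sub_le_norm_apply_add_smul (hT : T ≠ 0) (hε : 0 ≤ ε)
    (hH : ∀ l : ℝ, 0 ≤ l → ‖T + l • A‖ ^ 2 ≥ ‖T‖ ^ 2 - 2 * ε * ‖T‖ * ‖l • A‖)
    {p : ℝ} (hp : 0 < p) :
    ∃ x, ‖x‖ = 1 ∧
      ‖T‖ - ε * p * ‖A‖ - p ^ 2 * (‖A‖ ^ 2 / (2 * ‖T‖) + 1) ≤ ‖T x + p • A x‖ := by
  have hM : 0 < ‖T‖ := norm_pos_iff.2 hT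
  have : Nontrivial X := by
    obtain ⟨x, hx⟩ := DFunLike.ne_iff.1 hT
    exact nontrivial_of_ne x 0 fun h => hx (by simp [h])
  obtain ⟨x, hx, hSx⟩ := (T + p • A).exists_norm_eq_one_lt_apply
    (sub_lt_self _ (by positivity : 0 < p ^ 2))
  have hpA : ‖p • A‖ = p * ‖A‖ := by rw [norm_smul, Real.norm_of_nonneg hp.le]
  have hS := sub_sub_sq_div_le_of_sq_sub_le (N := ‖T + p • A‖) (w := p * ‖A‖) hM hε
    (by positivity) (hpA ▸ norm_sub_le_norm_add T (p • A)) (hpA ▸ hH p hp.le)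
  refine ⟨x, hx, ?_⟩
  simp only [add_apply, smul_apply] at hSx
  have : (p * ‖A‖) ^ 2 / (2 * ‖T‖) = p ^ 2 * (‖A‖ ^ 2 / (2 * ‖T‖)) := by ring
  linarith

theorem exists_norm_eq_one_one_sub_mul_le_norm_add_smul (hT : T ≠ 0) (hε : 0 ≤ ε)
    (hH : ∀ l : ℝ, 0 ≤ l → ‖T + l • A‖ ^ 2 ≥ ‖T‖ ^ 2 - 2 * ε * ‖T‖ * ‖l • A‖)
    {γ : ℝ} (hγ : 0 < γ) (hA : ∀ x, ‖x‖ = 1 → ‖T‖ - γ ≤ ‖T x‖ → γ ≤ ‖A x‖)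
    {c θ : ℝ} (hc : 0 < c) (hθ : 0 < θ) :
    ∃ x, ‖x‖ = 1 ∧ ‖T‖ - θ ≤ ‖T x‖ ∧
      ∀ l : ℝ, 0 ≤ l → (1 - c) * ‖T x‖ - ε * l * ‖A‖ ≤ ‖T x + l • A x‖ := by
  have hM : 0 < ‖T‖ := norm_pos_iff.2 hT
  set M := ‖T‖
  set a := ‖A‖
  set q := a ^ 2 / (2 * M)
  have hq : 0 ≤ q := by positivity
  -- every error term below is at most a multiple of `K * p`
  set K := (1 + ε) * a + q + 1
  have hKp : Tendsto (fun p => K * p) (𝓝[>] 0) (𝓝 0) := by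
    simpa using ((continuous_const_mul K).tendsto 0).mono_left nhdsWithin_le_nhds
  obtain ⟨p, ⟨hpθ, hpγ, hpM, hpc, hpcγ, hp1⟩, hp⟩ : ∃ p : ℝ,
      (K * p ≤ θ ∧ K * p ≤ γ ∧ K * p ≤ M / 2 ∧ K * p ≤ c * M / 2 ∧ 4 * (K * p) ≤ c * γ ∧
        p ≤ 1) ∧ 0 < p := by
    refine (Eventually.and (f := 𝓝[>] (0 : ℝ)) ?_ self_mem_nhdsWithin).exists
    filter_upwards [hKp.eventually_le_const hθ, hKp.eventually_le_const hγ,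
      hKp.eventually_le_const (half_pos hM),
      hKp.eventually_le_const (by positivity : 0 < c * M / 2),
      (hKp.const_mul 4).eventually_le_const (by simpa using mul_pos hc hγ),
      (tendsto_id.mono_left nhdsWithin_le_nhds).eventually_le_const one_pos]
      with p h₁ h₂ h₃ h₄ h₅ h₆ using ⟨h₁, h₂, h₃, h₄, by simpa using h₅, h₆⟩
  obtain ⟨x, hx, hup⟩ := exists_norm_eq_one_sub_le_norm_apply_add_smul hT hε hH hp
  have hTx : ‖T x‖ ≤ M := T.unit_le_opNorm x hx.le
  have hAx : ‖A x‖ ≤ a := A.unit_le_opNorm x hx.le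
  have hG : M - K * p ≤ ‖T x‖ := by
    have hpAx : ‖p • A x‖ ≤ p * a := by
      rw [norm_smul, Real.norm_of_nonneg hp.le]; exact mul_le_mul_of_nonneg_left hAx hp.le
    have := norm_add_le (T x) (p • A x)
    nlinarith [mul_nonneg (mul_nonneg hp.le (sub_nonneg.2 hp1)) (add_nonneg hq zero_le_one)]
  have hGM : M / 2 ≤ ‖T x‖ := by linarith
  have hKa : a * p ≤ K * p := by nlinarith [mul_nonneg hε (mul_nonneg (norm_nonneg A) hp.le)]
  have hKq : (q + 1) * p ≤ K * p := by nlinarith [mul_nonneg (norm_nonneg A) hp.le]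
  have hc₁ : p * a ≤ c * ‖T x‖ := by nlinarith [mul_le_mul_of_nonneg_left hGM hc.le]
  have hc₂ : 2 * M * (p ^ 2 * (q + 1)) ≤ c * ‖T x‖ * γ * p := by
    nlinarith [mul_le_mul_of_nonneg_left hGM (by positivity : 0 ≤ c * γ * p),
      mul_le_mul_of_nonneg_left (by linarith : 4 * ((q + 1) * p) ≤ c * γ)
        (by positivity : 0 ≤ M * p / 2)]
  exact ⟨x, hx, by linarith, fun l hl => one_sub_mul_norm_sub_le_norm_add_smul hTx hAx hγ
    (hA x hx (by linarith)) hε hp hup hc₁ hc₂ hl⟩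

theorem exists_seq_sq_le_norm_add_smul (hT : T ≠ 0) (hε : 0 ≤ ε)
    (hH : ∀ l : ℝ, 0 ≤ l → ‖T + l • A‖ ^ 2 ≥ ‖T‖ ^ 2 - 2 * ε * ‖T‖ * ‖l • A‖)
    {γ : ℝ} (hγ : 0 < γ) (hA : ∀ x, ‖x‖ = 1 → ‖T‖ - γ ≤ ‖T x‖ → γ ≤ ‖A x‖)
    {e : ℕ → ℝ} (he : ∀ n, 0 < e n) (he₁ : ∀ n, e n ≤ 1) :
    ∃ x : ℕ → X, (∀ n, ‖x n‖ = 1) ∧ Tendsto (fun n => ‖T (x n)‖) atTop (𝓝 ‖T‖) ∧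
      ∀ n, ∀ l : ℝ, 0 ≤ l → ‖T (x n) + l • A (x n)‖ ^ 2 ≥
        (1 - e n ^ 2) * ‖T (x n)‖ ^ 2 -
          2 * ε * Real.sqrt (1 - e n ^ 2) * ‖T (x n)‖ * ‖l • A‖ := by
  have hc : ∀ n, 0 < 1 - Real.sqrt (1 - e n ^ 2) := fun n =>
    sub_pos.2 ((Real.sqrt_lt' one_pos).2 (by nlinarith [he n]))
  choose x hx hTx hlow using fun n : ℕ =>
    exists_norm_eq_one_one_sub_mul_le_norm_add_smul hT hε hH hγ hA (hc n)
      (Nat.one_div_pos_of_nat (n := n))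
  refine ⟨x, hx, T.tendsto_norm_apply_of_sub_le hx hTx, fun n l hl => ?_⟩
  have hsq : Real.sqrt (1 - e n ^ 2) ^ 2 = 1 - e n ^ 2 :=
    Real.sq_sqrt (by nlinarith [he n, he₁ n])
  have hlA : ‖l • A‖ = l * ‖A‖ := by rw [norm_smul, Real.norm_of_nonneg hl]
  have hlow := hlow n l hl
  rw [sub_sub_cancel] at hlow
  have hsq_le := sq_sub_two_mul_le_sq_of_sub_le (M := Real.sqrt (1 - e n ^ 2) * ‖T (x n)‖)
    (N := ‖T (x n) + l • A (x n)‖) (w := ε * ‖l • A‖) (by positivity) (by positivity)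
    (by rw [hlA, ← mul_assoc]; exact hlow)
  rw [mul_pow, hsq] at hsq_le
  linarith

theorem sq_norm_add_smul_ge_of_tendsto_le (hε : 0 ≤ ε) {x : ℕ → X} (hx : ∀ n, ‖x n‖ = 1)
    (hTx : Tendsto (fun n => ‖T (x n)‖) atTop (𝓝 ‖T‖)) {L : ℝ}
    (hAx : Tendsto (fun n => ‖A (x n)‖) atTop (𝓝 L)) (hL : L ≤ ε * ‖A‖) (l : ℝ) :
    ‖T + l • A‖ ^ 2 ≥ ‖T‖ ^ 2 - 2 * ε * ‖T‖ * ‖l • A‖ := by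
  have hlow : ‖T‖ - |l| * L ≤ ‖T + l • A‖ :=
    le_of_tendsto' (hTx.sub (hAx.const_mul |l|)) fun n => by
      have := norm_sub_le_norm_add (T (x n)) (l • A (x n))
      rw [norm_smul, Real.norm_eq_abs] at this
      linarith [T.norm_apply_add_smul_le A (hx n) l]
  have hlA : |l| * L ≤ ε * ‖l • A‖ := by
    rw [norm_smul, Real.norm_eq_abs, mul_left_comm]
    exact mul_le_mul_of_nonneg_left hL (abs_nonneg l)
  have := sq_sub_two_mul_le_sq_of_sub_le (N := ‖T + l • A‖) (w := ε * ‖l • A‖) (norm_nonneg T)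
    (by positivity) (by linarith)
  linarith

theorem sq_norm_add_smul_ge_of_tendsto_sq_le {x : ℕ → X} (hx : ∀ n, ‖x n‖ = 1) {e : ℕ → ℝ}
    (he : Tendsto e atTop (𝓝 0)) (hTx : Tendsto (fun n => ‖T (x n)‖) atTop (𝓝 ‖T‖)) {l : ℝ}
    (h : ∀ n, ‖T (x n) + l • A (x n)‖ ^ 2 ≥ (1 - e n ^ 2) * ‖T (x n)‖ ^ 2 -
      2 * ε * Real.sqrt (1 - e n ^ 2) * ‖T (x n)‖ * ‖l • A‖) :
    ‖T + l • A‖ ^ 2 ≥ ‖T‖ ^ 2 - 2 * ε * ‖T‖ * ‖l • A‖ := by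
  have hs : Tendsto (fun n => 1 - e n ^ 2) atTop (𝓝 (1 - 0 ^ 2)) :=
    tendsto_const_nhds.sub (he.pow 2)
  have hlim := (hs.mul (hTx.pow 2)).sub (((hs.sqrt.const_mul (2 * ε)).mul hTx).mul_const ‖l • A‖)
  norm_num at hlim
  refine le_of_tendsto' hlim fun n => (h n).trans ?_
  exact pow_le_pow_left₀ (norm_nonneg _) (T.norm_apply_add_smul_le A (hx n) l) 2

end Operator

theorem approx_B_orth_iff_bounded_general
    {X Y : Type*} [NormedAddCommGroup X] [NormedSpace ℝ X]
    [NormedAddCommGroup Y] [NormedSpace ℝ Y]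
    (T A : X →L[ℝ] Y) (hT0 : T ≠ 0)
    (ε : ℝ) (hε0 : 0 ≤ ε) :
    (∀ l : ℝ, ‖T + l • A‖ ^ 2 ≥ ‖T‖ ^ 2 - 2 * ε * ‖T‖ * ‖l • A‖) ↔
      ((∃ x : ℕ → X, (∀ n, ‖x n‖ = 1) ∧
          Tendsto (fun n => ‖T (x n)‖) atTop (𝓝 ‖T‖) ∧
          ∃ L : ℝ, Tendsto (fun n => ‖A (x n)‖) atTop (𝓝 L) ∧ L ≤ ε * ‖A‖) ∨
        (∃ x y : ℕ → X, ∃ e d : ℕ → ℝ,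
          (∀ n, ‖x n‖ = 1) ∧ (∀ n, ‖y n‖ = 1) ∧
          (∀ n, 0 < e n) ∧ (∀ n, 0 < d n) ∧
          Tendsto e atTop (𝓝 0) ∧ Tendsto d atTop (𝓝 0) ∧
          Tendsto (fun n => ‖T (x n)‖) atTop (𝓝 ‖T‖) ∧
          Tendsto (fun n => ‖T (y n)‖) atTop (𝓝 ‖T‖) ∧
          (∀ n, ∀ l : ℝ, 0 ≤ l →
            ‖T (x n) + l • A (x n)‖ ^ 2 ≥
              (1 - (e n) ^ 2) * ‖T (x n)‖ ^ 2 -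
                2 * ε * Real.sqrt (1 - (e n) ^ 2) * ‖T (x n)‖ * ‖l • A‖) ∧
          (∀ n, ∀ l : ℝ, l ≤ 0 →
            ‖T (y n) + l • A (y n)‖ ^ 2 ≥
              (1 - (d n) ^ 2) * ‖T (y n)‖ ^ 2 -
                2 * ε * Real.sqrt (1 - (d n) ^ 2) * ‖T (y n)‖ * ‖l • A‖))) := by
  constructor
  · intro H
    by_cases ha : ∀ θ > 0, ∃ x, ‖x‖ = 1 ∧ ‖T‖ - θ ≤ ‖T x‖ ∧ ‖A x‖ ≤ ε * ‖A‖ + θ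
    · exact Or.inl (exists_seq_tendsto_of_forall_exists_le T A ha)
    push Not at ha
    obtain ⟨γ, hγ, hA⟩ := ha
    have hAγ : ∀ x, ‖x‖ = 1 → ‖T‖ - γ ≤ ‖T x‖ → γ ≤ ‖A x‖ := fun x hx hTx => by
      linarith [hA x hx hTx, mul_nonneg hε0 (norm_nonneg A)]
    have he : ∀ n : ℕ, 0 < 1 / ((n : ℝ) + 1) := fun n => Nat.one_div_pos_of_nat
    have he₁ : ∀ n : ℕ, 1 / ((n : ℝ) + 1) ≤ 1 := fun n =>
      div_le_one_of_le₀ (by simp) (by positivity)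
    obtain ⟨x, hx, hTx, hxA⟩ :=
      exists_seq_sq_le_norm_add_smul hT0 hε0 (fun l _ => H l) hγ hAγ he he₁
    obtain ⟨y, hy, hTy, hyA⟩ := exists_seq_sq_le_norm_add_smul (A := -A) hT0 hε0
      (fun l _ => by simpa using H (-l)) hγ (fun x hx hTx => by simpa using hAγ x hx hTx) he he₁
    refine Or.inr ⟨x, y, _, _, hx, hy, he, he, tendsto_one_div_add_atTop_nhds_zero_nat,
      tendsto_one_div_add_atTop_nhds_zero_nat, hTx, hTy, hxA, fun n l hl => ?_⟩
    simpa using hyA n (-l) (neg_nonneg.2 hl)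
  · rintro (⟨x, hx, hTx, L, hAx, hL⟩ | ⟨x, y, e, d, hx, hy, -, -, he, hd, hTx, hTy, hxA, hyA⟩) l
    · exact sq_norm_add_smul_ge_of_tendsto_le hε0 hx hTx hAx hL l
    · rcases le_total 0 l with hl | hl
      · exact sq_norm_add_smul_ge_of_tendsto_sq_le hx he hTx fun n => hxA n l hl
      · exact sq_norm_add_smul_ge_of_tendsto_sq_le hy hd hTy fun n => hyA n l hl

/-- Characterization of approximate Birkhoff-James orthogonality `T ⊥_B^ε A` of
bounded linear operators between arbitrary real normed spaces, with `T ≠ 0`. -/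
theorem approx_B_orth_iff_bounded
    {X Y : Type*} [NormedAddCommGroup X] [NormedSpace ℝ X]
    [NormedAddCommGroup Y] [NormedSpace ℝ Y]
    (T A : X →L[ℝ] Y) (hT0 : T ≠ 0)
    (ε : ℝ) (hε0 : 0 ≤ ε) (hε1 : ε < 1) :
    (∀ l : ℝ, ‖T + l • A‖ ^ 2 ≥ ‖T‖ ^ 2 - 2 * ε * ‖T‖ * ‖l • A‖) ↔
      ((∃ x : ℕ → X, (∀ n, ‖x n‖ = 1) ∧
          Tendsto (fun n => ‖T (x n)‖) atTop (𝓝 ‖T‖) ∧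
          ∃ L : ℝ, Tendsto (fun n => ‖A (x n)‖) atTop (𝓝 L) ∧ L ≤ ε * ‖A‖) ∨
        (∃ x y : ℕ → X, ∃ e d : ℕ → ℝ,
          (∀ n, ‖x n‖ = 1) ∧ (∀ n, ‖y n‖ = 1) ∧
          (∀ n, 0 < e n) ∧ (∀ n, 0 < d n) ∧
          Tendsto e atTop (𝓝 0) ∧ Tendsto d atTop (𝓝 0) ∧
          Tendsto (fun n => ‖T (x n)‖) atTop (𝓝 ‖T‖) ∧
          Tendsto (fun n => ‖T (y n)‖) atTop (𝓝 ‖T‖) ∧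
          (∀ n, ∀ l : ℝ, 0 ≤ l →
            ‖T (x n) + l • A (x n)‖ ^ 2 ≥
              (1 - (e n) ^ 2) * ‖T (x n)‖ ^ 2 -
                2 * ε * Real.sqrt (1 - (e n) ^ 2) * ‖T (x n)‖ * ‖l • A‖) ∧
          (∀ n, ∀ l : ℝ, l ≤ 0 →
            ‖T (y n) + l • A (y n)‖ ^ 2 ≥
              (1 - (d n) ^ 2) * ‖T (y n)‖ ^ 2 -
                2 * ε * Real.sqrt (1 - (d n) ^ 2) * ‖T (y n)‖ * ‖l • A‖))) :=
  approx_B_orth_iff_bounded_general T A hT0 ε hε0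
end
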